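/- arXiv:1604.05414 — 13 statements merged into one kernel-verified Lean document; each statement's English description precedes it below -/
import Mathlib

section
/- Let Δ be a pure simplicial complex. Then Δ is strongly shellable if and only if its complement complex Δ^c (whose facets are the complements of facets of Δ with respect to the vertex set) is strongly shellable. -/
/-! Complementation is an injective, inclusion-reversing involution exchanging `∩` and `∪`,
so the complements of a strong shelling, listed in the same order, again form one. The only
condition that is not self-dual is `|F_j \ F_k| = 1`: it becomes `|F_k \ F_j| = 1`, which is
the same number because all facets have the same size. -/

open scoped Classical

def StronglyShellable {α : Type*} [DecidableEq α] (F : Finset (Finset α)) : Prop :=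
  ∃ l : List (Finset α), l.Nodup ∧ l.toFinset = F ∧
    ∀ i j : Fin l.length, (i : ℕ) < (j : ℕ) →
      ∃ k : Fin l.length, (k : ℕ) < (j : ℕ) ∧
        (l.get j \ l.get k).card = 1 ∧
        l.get i ∩ l.get j ⊆ l.get k ∧ l.get k ⊆ l.get i ∪ l.get j

namespace Finset

variable {α : Type*} [Fintype α] [DecidableEq α]

theorem card_compl_sdiff_compl_of_card_eq {s t : Finset α} (h : s.card = t.card) :
    (sᶜ \ tᶜ).card = (s \ t).card := by
  rw [compl_sdiff_compl, card_sdiff_comm h.symm]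

theorem image_compl_image_compl (F : Finset (Finset α)) :
    (F.image compl).image compl = F := by
  rw [image_image, compl_comp_compl, image_id]

theorem card_eq_of_mem_image_compl {F : Finset (Finset α)} {d : ℕ}
    (hF : ∀ s ∈ F, s.card = d) : ∀ s ∈ F.image compl, s.card = Fintype.card α - d := by
  simp only [mem_image, forall_exists_index, and_imp, forall_apply_eq_imp_iff₂]
  intro s hs
  rw [card_compl, hF s hs]

end Finset

theorem StronglyShellable.image_compl {α : Type*} [Fintype α] [DecidableEq α]
    {F : Finset (Finset α)} {d : ℕ} (hF : ∀ s ∈ F, s.card = d) (h : StronglyShellable F) :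
    StronglyShellable (F.image compl) := by
  obtain ⟨l, hnodup, rfl, hshell⟩ := h
  have hlen : (l.map compl).length = l.length := l.length_map _
  have hget (x : Fin (l.map compl).length) : (l.map compl).get x = (l.get (x.cast hlen))ᶜ := by
    simp [List.get_eq_getElem]
  have hcard (x : Fin l.length) : (l.get x).card = d :=
    hF _ (List.mem_toFinset.mpr (l.get_mem x))
  refine ⟨l.map compl, hnodup.map compl_injective, by ext; simp, fun i j hij => ?_⟩
  obtain ⟨k, hkj, hcard_sdiff, hinter, hunion⟩ := hshell (i.cast hlen) (j.cast hlen) hij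
  refine ⟨k.cast hlen.symm, hkj, ?_⟩
  simp only [hget, Fin.cast_cast, Fin.cast_eq_self, ← Finset.compl_union, ← Finset.compl_inter,
    Finset.compl_subset_compl]
  exact ⟨(Finset.card_compl_sdiff_compl_of_card_eq ((hcard _).trans (hcard _).symm)).trans
    hcard_sdiff, hunion, hinter⟩

/-- A pure simplicial complex (given by its facet set) is strongly shellable iff its
complement complex (facets complemented within the vertex set) is strongly shellable. -/
theorem stmt0 {α : Type*} [Fintype α] [DecidableEq α] (F : Finset (Finset α))
    (hpure : ∃ d, ∀ s ∈ F, s.card = d) :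
    StronglyShellable F ↔ StronglyShellable (F.image fun s => sᶜ) := by
  obtain ⟨d, hF⟩ := hpure
  refine ⟨StronglyShellable.image_compl hF, fun h => ?_⟩
  simpa only [Finset.image_compl_image_compl] using
    StronglyShellable.image_compl (Finset.card_eq_of_mem_image_compl hF) h
end

section
/- Let Δ be a pure simplicial complex. Then Δ is strongly shellable if and only if there exists a linear order ≻ on its facets such that whenever F_i ≻ F_j, there exists a facet F_k ≻ F_j with dis(F_k,F_j)=1 and dis(F_i,F_k)=dis(F_i,F_j)−1, where dis(F,G)=|F∖G|. -/
/-!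
Write `dis(A, B) = #(A \ B)`. If `A ∩ B ⊆ C ⊆ A ∪ B` then `A \ C = (A \ B) \ (C \ B)`, so moving
from `B` to `C` brings us exactly `#(C \ B)` closer to `A`. Conversely, for all finite sets
`#(A \ C) + #(A ∩ (C \ B)) = #(A \ B) + #(A ∩ (B \ C))` (both sides count `A \ (B ∩ C)`), so
if `C` arises from `B` by exchanging one element, `dis(A, C) = dis(A, B) - 1` forces the element
gained to lie in `A` and the element lost to lie outside `A`, i.e. `A ∩ B ⊆ C ⊆ A ∪ B`. For
facets of equal size `#(B \ C) = #(C \ B)`, so both conditions ask for the same `k`.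
-/

open scoped Classical

namespace Finset

variable {α : Type*} [DecidableEq α] {A B C : Finset α}

theorem card_sdiff_of_inter_subset_of_subset_union (hABC : A ∩ B ⊆ C) (hCAB : C ⊆ A ∪ B) :
    (A \ C).card = (A \ B).card - (C \ B).card := by
  have hsub : C \ B ⊆ A \ B := fun x hx => by grind [hCAB (mem_sdiff.1 hx).1]
  have heq : A \ C = (A \ B) \ (C \ B) := by
    ext x
    grind [@hABC x]
  rw [heq, card_sdiff_of_subset hsub]

theorem card_sdiff_add_card_inter_sdiff (A B C : Finset α) :
    (A \ C).card + (A ∩ (C \ B)).card = (A \ (B ∩ C)).card := by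
  rw [← card_sdiff_add_card_inter (A \ (B ∩ C)) C]
  congr 2 <;> ext x <;> grind

theorem inter_subset_and_subset_union_of_card_sdiff_add_one (hCB : (C \ B).card = 1)
    (hBC : (B \ C).card ≤ 1) (h : (A \ C).card + 1 = (A \ B).card) : A ∩ B ⊆ C ∧ C ⊆ A ∪ B := by
  have hbal : (A \ C).card + (A ∩ (C \ B)).card = (A \ B).card + (A ∩ (B \ C)).card := by
    rw [card_sdiff_add_card_inter_sdiff, card_sdiff_add_card_inter_sdiff, inter_comm B]
  have hgain : (A ∩ (C \ B)).card ≤ 1 := (card_le_card inter_subset_right).trans_eq hCB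
  have hloss : (A ∩ (B \ C)).card ≤ 1 := (card_le_card inter_subset_right).trans hBC
  have hgain_mem : C \ B ⊆ A :=
    (eq_of_subset_of_card_le (inter_subset_right : A ∩ (C \ B) ⊆ C \ B) (by omega)).symm ▸
      inter_subset_left
  have hloss_disj : Disjoint A (B \ C) := disjoint_iff_inter_eq_empty.2 (card_eq_zero.1 (by omega))
  refine ⟨fun x hx => ?_, fun x hx => ?_⟩
  · by_contra hxC
    exact disjoint_left.1 hloss_disj (mem_inter.1 hx).1 (mem_sdiff.2 ⟨(mem_inter.1 hx).2, hxC⟩)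
  · grind [@hgain_mem x]

end Finset

theorem List.exists_order_of_imp {α : Type*} [DecidableEq α] {F : Finset (Finset α)}
    {P Q : Finset α → Finset α → Finset α → Prop}
    (hPQ : ∀ A ∈ F, ∀ B ∈ F, ∀ C ∈ F, A ≠ B → P A B C → Q A B C)
    (h : ∃ l : List (Finset α), l.Nodup ∧ l.toFinset = F ∧
      ∀ i j : Fin l.length, (i : ℕ) < (j : ℕ) →
        ∃ k : Fin l.length, (k : ℕ) < (j : ℕ) ∧ P (l.get i) (l.get j) (l.get k)) :
    ∃ l : List (Finset α), l.Nodup ∧ l.toFinset = F ∧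
      ∀ i j : Fin l.length, (i : ℕ) < (j : ℕ) →
        ∃ k : Fin l.length, (k : ℕ) < (j : ℕ) ∧ Q (l.get i) (l.get j) (l.get k) := by
  obtain ⟨l, hnd, rfl, hP⟩ := h
  refine ⟨l, hnd, rfl, fun i j hij => ?_⟩
  obtain ⟨k, hkj, hk⟩ := hP i j hij
  have hmem (m : Fin l.length) : l.get m ∈ l.toFinset := List.mem_toFinset.2 (l.get_mem m)
  have hne : l.get i ≠ l.get j := fun h => hij.ne (Fin.val_eq_of_eq (hnd.get_inj_iff.1 h))
  exact ⟨k, hkj, hPQ _ (hmem i) _ (hmem j) _ (hmem k) hne hk⟩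

-- The list order is the facet order with earlier facets larger: `F_i ≻ F_j` iff `i < j`.
/-- A pure complex is strongly shellable iff there is a linear order on the facets such that
whenever `F i ≻ F j` (i.e. `i < j` in the list, earlier = larger), there is `F k ≻ F j` with
`dis(F k, F j) = 1` and `dis(F i, F k) = dis(F i, F j) - 1`. -/
theorem stmt1 {α : Type*} [DecidableEq α] (F : Finset (Finset α))
    (hpure : ∃ d, ∀ s ∈ F, s.card = d) :
    StronglyShellable F ↔
      ∃ l : List (Finset α), l.Nodup ∧ l.toFinset = F ∧
        ∀ i j : Fin l.length, (i : ℕ) < (j : ℕ) →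
          ∃ k : Fin l.length, (k : ℕ) < (j : ℕ) ∧
            (l.get k \ l.get j).card = 1 ∧
            (l.get i \ l.get k).card = (l.get i \ l.get j).card - 1 := by
  obtain ⟨d, hd⟩ := hpure
  constructor
  · refine List.exists_order_of_imp
      (P := fun A B C => (B \ C).card = 1 ∧ A ∩ B ⊆ C ∧ C ⊆ A ∪ B)
      (Q := fun A B C => (C \ B).card = 1 ∧ (A \ C).card = (A \ B).card - 1)
      fun A _ B hB C hC _ ⟨hBC, hABC, hCAB⟩ => ?_
    have hCB : (C \ B).card = 1 := (Finset.card_sdiff_comm ((hd B hB).trans (hd C hC).symm)) ▸ hBC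
    exact ⟨hCB, hCB ▸ Finset.card_sdiff_of_inter_subset_of_subset_union hABC hCAB⟩
  · refine List.exists_order_of_imp
      (P := fun A B C => (C \ B).card = 1 ∧ (A \ C).card = (A \ B).card - 1)
      (Q := fun A B C => (B \ C).card = 1 ∧ A ∩ B ⊆ C ∧ C ⊆ A ∪ B)
      fun A hA B hB C hC hAB ⟨hCB, hdist⟩ => ?_
    have hBC : (B \ C).card = 1 := (Finset.card_sdiff_comm ((hd C hC).trans (hd B hB).symm)) ▸ hCB
    have hApos : 0 < (A \ B).card := by
      refine Finset.card_pos.2 (Finset.sdiff_nonempty.2 fun hsub => hAB ?_)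
      exact Finset.eq_of_subset_of_card_le hsub ((hd B hB).trans (hd A hA).symm).le
    exact ⟨hBC, Finset.inter_subset_and_subset_union_of_card_sdiff_add_one hCB hBC.le (by omega)⟩
end

section
/- Every matroid complex is strongly shellable. -/
/-!
Order the facets colexicographically. If `B` comes before `B'`, the largest vertex `m` of
`B ∆ B'` lies in `B'`. Basis exchange gives `a ∈ B \ B'` such that `B' - m + a` is a facet:
extend `B' - m` to a face maximal inside `(B' - m) ∪ B`; since `B` is maximal there too, purity
of that induced subcomplex makes the extension a facet with exactly one new vertex `a ∈ B`.
As `a < m`, the facet `B' - m + a` precedes `B'`, and it lies between `B ∩ B'` and `B ∪ B'`.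
-/

open scoped Classical

section

open Finset

variable {α : Type*} [DecidableEq α]

theorem StronglyShellable.of_injective {β : Type*} [LinearOrder β] {F : Finset (Finset α)}
    (w : Finset α → β) (hw : Function.Injective w)
    (h : ∀ B ∈ F, ∀ B' ∈ F, w B < w B' →
      ∃ C ∈ F, w C < w B' ∧ #(B' \ C) = 1 ∧ B ∩ B' ⊆ C ∧ C ⊆ B ∪ B') :
    StronglyShellable F := by
  let r : Finset α → Finset α → Prop := fun s t => w s ≤ w t
  have : IsTrans _ r := ⟨fun _ _ _ => le_trans⟩
  have : Std.Total r := ⟨fun _ _ => le_total _ _⟩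
  have : Std.Antisymm r := ⟨fun _ _ h₁ h₂ => hw (le_antisymm h₁ h₂)⟩
  set l := F.sort r
  have hmem : ∀ i, l.get i ∈ F := fun i => (mem_sort r).1 (List.get_mem _ _)
  have hmono : StrictMono fun i => w (l.get i) := fun i j hij =>
    ((pairwise_sort F r).rel_get_of_lt hij).lt_of_ne
      (hw.ne ((sort_nodup F r).get_inj_iff.not.2 hij.ne))
  refine ⟨l, sort_nodup F r, sort_toFinset F r, fun i j hij => ?_⟩
  obtain ⟨C, hC, hCj, hexch⟩ := h _ (hmem i) _ (hmem j) (hmono hij)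
  obtain ⟨k, rfl⟩ := List.mem_iff_get.1 ((mem_sort r).2 hC)
  exact ⟨k, hmono.lt_iff_lt.1 hCj, hexch⟩

theorem StronglyShellable.of_exchange {F : Finset (Finset α)}
    (hF : ∀ B ∈ F, ∀ B' ∈ F, ∀ x ∈ B', x ∉ B → ∃ a ∈ B, a ∉ B' ∧ insert a (B'.erase x) ∈ F) :
    StronglyShellable F := by
  -- any injection of the vertices into a linear order would do
  let e : α ↪ Cardinal := embeddingToCardinal
  refine .of_injective (fun s => toColex (s.map e)) (toColex.injective.comp (map_injective e)) ?_
  intro B hB B' hB' hlt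
  obtain ⟨_, hmB', hmB, hmax⟩ := Colex.toColex_lt_toColex_iff_exists_forall_lt.1 hlt
  obtain ⟨m, hm, rfl⟩ := mem_map.1 hmB'
  replace hmB : m ∉ B := fun h => hmB (mem_map_of_mem e h)
  obtain ⟨a, haB, haB', hC⟩ := hF B hB B' hB' m hm hmB
  have ham : a ≠ m := ne_of_mem_of_not_mem haB hmB
  refine ⟨_, hC, ?_, card_eq_one.2 ⟨m, ?_⟩, fun x hx => ?_,
    insert_subset (mem_union_left _ haB) ((erase_subset _ _).trans subset_union_right)⟩
  · have hlt : e a < e m := hmax _ (mem_map_of_mem e haB) (by simpa using haB')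
    have key := (Colex.insert_lt_insert (s := (B'.erase m).map e) (by simp [ham, haB'])
      (by simp)).2 hlt
    simpa [map_insert, map_erase, insert_erase, hm] using key
  · ext x
    simp only [mem_sdiff, mem_insert, mem_erase, mem_singleton]
    constructor
    · rintro ⟨hx, hxC⟩
      by_contra hxm
      exact hxC (Or.inr ⟨hxm, hx⟩)
    · rintro rfl
      simp [hm, ham.symm]
  · exact mem_insert_of_mem
      (mem_erase.2 ⟨ne_of_mem_of_not_mem (mem_inter.1 hx).1 hmB, (mem_inter.1 hx).2⟩)

namespace Finset

def facets (Δ : Finset (Finset α)) : Finset (Finset α) :=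
  Δ.filter fun s => ∀ t ∈ Δ, s ⊆ t → s = t

def IsInducedPure (Δ : Finset (Finset α)) : Prop :=
  ∀ W : Finset α, ∀ s ∈ Δ, ∀ t ∈ Δ, s ⊆ W → t ⊆ W →
    (∀ u ∈ Δ, u ⊆ W → s ⊆ u → s = u) → (∀ u ∈ Δ, u ⊆ W → t ⊆ u → t = u) → #s = #t

variable {Δ : Finset (Finset α)} {s B B' : Finset α}

lemma mem_facets : s ∈ Δ.facets ↔ s ∈ Δ ∧ ∀ t ∈ Δ, s ⊆ t → s = t := mem_filter

lemma exists_subset_mem_facets (hs : s ∈ Δ) : ∃ B ∈ Δ.facets, s ⊆ B := by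
  obtain ⟨B, hsB, hB⟩ := exists_le_maximal Δ hs
  exact ⟨B, mem_facets.2 ⟨hB.1, fun t ht hBt => le_antisymm hBt (hB.2 ht hBt)⟩, hsB⟩

lemma IsInducedPure.card_eq_of_mem_facets (hΔ : Δ.IsInducedPure) (hB : B ∈ Δ.facets)
    (hB' : B' ∈ Δ.facets) : #B = #B' :=
  hΔ (B ∪ B') B (mem_facets.1 hB).1 B' (mem_facets.1 hB').1 subset_union_left subset_union_right
    (fun u hu _ => (mem_facets.1 hB).2 u hu) (fun u hu _ => (mem_facets.1 hB').2 u hu)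

lemma IsInducedPure.mem_facets_of_card_eq (hΔ : Δ.IsInducedPure) (hs : s ∈ Δ) (hB : B ∈ Δ.facets)
    (hcard : #s = #B) : s ∈ Δ.facets := by
  refine mem_facets.2 ⟨hs, fun u hu hsu => ?_⟩
  obtain ⟨D, hD, huD⟩ := exists_subset_mem_facets hu
  obtain rfl : s = D := eq_of_subset_of_card_le (hsu.trans huD)
    (by rw [hcard, hΔ.card_eq_of_mem_facets hB hD])
  exact subset_antisymm hsu huD

lemma IsInducedPure.exists_insert_erase_mem_facets (hdown : ∀ s ∈ Δ, ∀ t ⊆ s, t ∈ Δ)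
    (hΔ : Δ.IsInducedPure) (hB : B ∈ Δ.facets) (hB' : B' ∈ Δ.facets) {x : α} (hx : x ∈ B')
    (hxB : x ∉ B) : ∃ a ∈ B, a ∉ B' ∧ insert a (B'.erase x) ∈ Δ.facets := by
  set W := B'.erase x ∪ B
  -- a face maximal inside `W` above `B' - x` has `#B` elements, as `Δ_W` is pure
  obtain ⟨C, hxC, hCmax⟩ := exists_le_maximal (Δ.filter (· ⊆ W)) (a := B'.erase x)
    (mem_filter.2 ⟨hdown B' (mem_facets.1 hB').1 _ (erase_subset _ _), subset_union_left⟩)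
  obtain ⟨hCΔ, hCW⟩ := mem_filter.1 hCmax.1
  have hCB : #C = #B := hΔ W C hCΔ B (mem_facets.1 hB).1 hCW subset_union_right
    (fun u hu huW hCu => le_antisymm hCu (hCmax.2 (mem_filter.2 ⟨hu, huW⟩) hCu))
    (fun u hu _ => (mem_facets.1 hB).2 u hu)
  obtain ⟨a, hax, rfl⟩ := exists_eq_insert_iff.2
    ⟨hxC, by rw [card_erase_add_one hx, hCB, hΔ.card_eq_of_mem_facets hB' hB]⟩
  have haB : a ∈ B := (mem_union.1 (hCW (mem_insert_self a _))).resolve_left hax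
  refine ⟨a, haB, fun haB' => hax (mem_erase.2 ⟨ne_of_mem_of_not_mem haB hxB, haB'⟩),
    hΔ.mem_facets_of_card_eq hCΔ hB hCB⟩

end Finset

end

/-- Every matroid complex (a simplicial complex all of whose induced subcomplexes are pure)
is strongly shellable. Here Δ is a downward-closed finite family of finsets, and the matroid
condition says: for every vertex subset W, all maximal faces contained in W have equal size. -/
theorem stmt2 {α : Type*} [Fintype α] [DecidableEq α] (Δ : Finset (Finset α))
    (hdown : ∀ s ∈ Δ, ∀ t ⊆ s, t ∈ Δ)
    (hmat : ∀ W : Finset α, ∀ s ∈ Δ, ∀ t ∈ Δ, s ⊆ W → t ⊆ W →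
      (∀ u ∈ Δ, u ⊆ W → s ⊆ u → s = u) →
      (∀ u ∈ Δ, u ⊆ W → t ⊆ u → t = u) → s.card = t.card) :
    StronglyShellable (Δ.filter fun s => ∀ t ∈ Δ, s ⊆ t → s = t) := by
  -- the filter above decides its predicate through `Fintype (Finset α)`, unlike `facets`
  rw [show Δ.filter (fun s => ∀ t ∈ Δ, s ⊆ t → s = t) = Δ.facets from
    Finset.ext fun _ => Finset.mem_filter.trans Finset.mem_facets.symm]
  exact StronglyShellable.of_exchange fun _ hB _ hB' _ hx hxB =>
    Finset.IsInducedPure.exists_insert_erase_mem_facets hdown hmat hB hB' hx hxB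
end

section
/- Let X and Y be disjoint finite sets, λ a positive integer, and i ≤ j indices with max(0, λ−|Y|) ≤ i ≤ j ≤ min(λ, |X|). Let A_{i,j} be the collection of all sets X'∪Y' with X' ⊆ X, Y' ⊆ Y, |X'|+|Y'| = λ and i ≤ |X'| ≤ j. Then the simplicial complex whose facet set is A_{i,j} is a matroid complex, hence strongly shellable. -/
open scoped Classical

/-!
The complex Δ consists of the subsets `s ⊆ X ∪ Y` with `|s ∩ X| ≤ j`, `|s ∩ Y| ≤ λ - i` and
`|s| ≤ λ`, and `A` is the set of its members of size `λ`. These are the independent sets and the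
bases of a truncated partition matroid, so Δ has the augmentation property: a maximal face of an
induced subcomplex that is smaller than another face could be augmented from it, hence all
induced subcomplexes are pure, and augmentation also yields basis exchange for `A`.
Ordering `A` colexicographically is then a strong shelling: if `G` precedes `F`, the largest
element `b` of their symmetric difference lies in `F`, and exchanging `b` for some `x ∈ G \ F`
gives the earlier facet `F - b + x`.
-/

open Finset

section Augmentation

variable {α : Type*} [DecidableEq α]

def HasAugmentation (Δ : Finset (Finset α)) : Prop :=
  ∀ s ∈ Δ, ∀ t ∈ Δ, #s < #t → ∃ x ∈ t \ s, insert x s ∈ Δ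

namespace HasAugmentation

variable {Δ : Finset (Finset α)} {s t W : Finset α}

theorem card_le_of_maximal (hΔ : HasAugmentation Δ) (hs : s ∈ Δ) (ht : t ∈ Δ) (hsW : s ⊆ W)
    (htW : t ⊆ W) (hsmax : ∀ u ∈ Δ, u ⊆ W → s ⊆ u → s = u) : #t ≤ #s := by
  by_contra! hlt
  obtain ⟨x, hx, hxs⟩ := hΔ s hs t ht hlt
  obtain ⟨hxt, hxs'⟩ := mem_sdiff.1 hx
  have := hsmax _ hxs (insert_subset (htW hxt) hsW) (subset_insert x s)
  exact hxs' (this ▸ mem_insert_self x s)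

theorem card_eq_of_maximal (hΔ : HasAugmentation Δ) (hs : s ∈ Δ) (ht : t ∈ Δ) (hsW : s ⊆ W)
    (htW : t ⊆ W) (hsmax : ∀ u ∈ Δ, u ⊆ W → s ⊆ u → s = u)
    (htmax : ∀ u ∈ Δ, u ⊆ W → t ⊆ u → t = u) : #s = #t :=
  (hΔ.card_le_of_maximal ht hs htW hsW htmax).antisymm
    (hΔ.card_le_of_maximal hs ht hsW htW hsmax)

theorem exists_superset_card_eq (hΔ : HasAugmentation Δ) {B : Finset α} (hs : s ∈ Δ)
    (hB : B ∈ Δ) (hsB : #s ≤ #B) : ∃ F ∈ Δ, s ⊆ F ∧ #F = #B := by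
  induction hn : #B - #s generalizing s with
  | zero => exact ⟨s, hs, subset_rfl, by omega⟩
  | succ n ih =>
    obtain ⟨x, hx, hxs⟩ := hΔ s hs B hB (by omega)
    have hcard : #(insert x s) = #s + 1 := card_insert_of_notMem (mem_sdiff.1 hx).2
    obtain ⟨F, hF, hsF, hFB⟩ := ih hxs (by omega) (by omega)
    exact ⟨F, hF, (subset_insert x s).trans hsF, hFB⟩

theorem exists_insert_erase_mem_filter_card (hΔ : HasAugmentation Δ)
    (hdown : IsLowerSet (Δ : Set (Finset α))) {r : ℕ} {F G : Finset α}
    (hF : F ∈ Δ.filter (#· = r)) (hG : G ∈ Δ.filter (#· = r)) {b : α} (hb : b ∈ F \ G) :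
    ∃ x ∈ G \ F, insert x (F.erase b) ∈ Δ.filter (#· = r) := by
  rw [mem_filter] at hF hG
  obtain ⟨hbF, hbG⟩ := mem_sdiff.1 hb
  have hFpos := card_pos.2 ⟨b, hbF⟩
  have herase : F.erase b ∈ Δ := hdown (erase_subset b F) hF.1
  obtain ⟨x, hx, hK⟩ := hΔ _ herase G hG.1 (by rw [card_erase_of_mem hbF]; omega)
  obtain ⟨hxG, hxF⟩ := mem_sdiff.1 hx
  have hxF' : x ∉ F := fun h => hxF (mem_erase.2 ⟨fun hxb => hbG (hxb ▸ hxG), h⟩)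
  refine ⟨x, mem_sdiff.2 ⟨hxG, hxF'⟩, mem_filter.2 ⟨hK, ?_⟩⟩
  rw [card_insert_of_notMem hxF, card_erase_of_mem hbF]
  omega

theorem biUnion_filter_card_powerset (hΔ : HasAugmentation Δ)
    (hdown : IsLowerSet (Δ : Set (Finset α))) {r : ℕ} (hr : ∃ B ∈ Δ, #B = r)
    (hle : ∀ s ∈ Δ, #s ≤ r) : (Δ.filter (#· = r)).biUnion powerset = Δ := by
  ext s
  simp only [mem_biUnion, mem_filter, mem_powerset]
  refine ⟨fun ⟨F, ⟨hF, _⟩, hsF⟩ => hdown hsF hF, fun hs => ?_⟩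
  obtain ⟨B, hB, rfl⟩ := hr
  obtain ⟨F, hF, hsF, hFB⟩ := hΔ.exists_superset_card_eq hs hB (hle s hs)
  exact ⟨F, ⟨hF, hFB⟩, hsF⟩

end HasAugmentation

end Augmentation

section Shelling

theorem stronglyShellable_of_rank {α β : Type*} [DecidableEq α] [LinearOrder β]
    (φ : Finset α → β) {A : Finset (Finset α)}
    (hA : ∀ G ∈ A, ∀ F ∈ A, G ≠ F → φ G ≤ φ F →
      ∃ K ∈ A, φ K < φ F ∧ #(F \ K) = 1 ∧ G ∩ F ⊆ K ∧ K ⊆ G ∪ F) :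
    StronglyShellable A := by
  set l := A.toList.mergeSort fun F G => decide (φ F ≤ φ G)
  have hperm : l.Perm A.toList := List.mergeSort_perm _ _
  have hnodup : l.Nodup := hperm.nodup_iff.2 A.nodup_toList
  have hmem : ∀ F, F ∈ l ↔ F ∈ A := fun F => hperm.mem_iff.trans mem_toList
  have hsorted : l.Pairwise fun F G => φ F ≤ φ G := by
    simpa using List.pairwise_mergeSort (le := fun F G => decide (φ F ≤ φ G))
      (fun _ _ _ h₁ h₂ => by simp only [decide_eq_true_eq] at *; exact h₁.trans h₂)
      (fun F G => by simpa using le_total (φ F) (φ G)) A.toList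
  refine ⟨l, hnodup, by rw [List.toFinset_eq_of_perm _ _ hperm, toList_toFinset], ?_⟩
  intro a c hac
  have hne : l.get a ≠ l.get c := fun h => hac.ne (congrArg Fin.val (hnodup.get_inj_iff.1 h))
  obtain ⟨K, hK, hKc, hcard, hinter, hunion⟩ := hA _ ((hmem _).1 (l.get_mem a)) _
    ((hmem _).1 (l.get_mem c)) hne (hsorted.rel_get_of_lt hac)
  obtain ⟨k, rfl⟩ := List.mem_iff_get.1 ((hmem K).2 hK)
  refine ⟨k, ?_, hcard, hinter, hunion⟩
  by_contra! hck
  exact hKc.not_ge (hsorted.rel_get_of_le hck)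

theorem stronglyShellable_of_exchange {α : Type*} [LinearOrder α] {A : Finset (Finset α)}
    (hA : ∀ F ∈ A, ∀ G ∈ A, ∀ b ∈ F \ G, ∃ x ∈ G \ F, insert x (F.erase b) ∈ A) :
    StronglyShellable A := by
  refine stronglyShellable_of_rank toColex fun G hG F hF hne hle => ?_
  have hlt : toColex G < toColex F := hle.lt_of_ne (toColex.injective.ne hne)
  obtain ⟨b, hbF, hbG, hbmax⟩ := Colex.toColex_lt_toColex_iff_exists_forall_lt.1 hlt
  obtain ⟨x, hx, hK⟩ := hA F hF G hG b (mem_sdiff.2 ⟨hbF, hbG⟩)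
  obtain ⟨hxG, hxF⟩ := mem_sdiff.1 hx
  have hxb : x ≠ b := fun h => hbG (h ▸ hxG)
  refine ⟨_, hK, ?_, ?_, ?_, ?_⟩
  · refine Colex.toColex_lt_toColex_iff_exists_forall_lt.2 ⟨b, hbF, by simp [hxb.symm], ?_⟩
    intro a ha haF
    obtain rfl : a = x := by simpa [haF] using ha
    exact hbmax a hxG hxF
  · rw [card_eq_one]; exact ⟨b, by ext a; by_cases a = b <;> aesop⟩
  · intro a ha
    obtain ⟨haG, haF⟩ := mem_inter.1 ha
    exact mem_insert_of_mem (mem_erase.2 ⟨fun h => hbG (h ▸ haG), haF⟩)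
  · exact insert_subset (mem_union_left F hxG) ((erase_subset b F).trans subset_union_right)

end Shelling

section Partition

variable {α : Type*} [DecidableEq α] {X Y : Finset α}

theorem card_inter_add_card_inter (hXY : Disjoint X Y) {s : Finset α} (hs : s ⊆ X ∪ Y) :
    #(s ∩ X) + #(s ∩ Y) = #s := by
  rw [← card_union_of_disjoint (hXY.mono inter_subset_right inter_subset_right),
    ← inter_union_distrib_left, inter_eq_left.2 hs]

theorem union_inter_eq_left_of_disjoint (hXY : Disjoint X Y) {X' Y' : Finset α}
    (hX' : X' ⊆ X) (hY' : Y' ⊆ Y) : (X' ∪ Y') ∩ X = X' := by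
  rw [union_inter_distrib_right, inter_eq_left.2 hX',
    disjoint_iff_inter_eq_empty.1 (hXY.symm.mono_left hY'), union_empty]

theorem mem_image_union_filter_powerset_product (hXY : Disjoint X Y)
    (P : Finset α × Finset α → Prop) [DecidablePred P] {F : Finset α} :
    F ∈ ((X.powerset ×ˢ Y.powerset).filter P).image (fun p => p.1 ∪ p.2) ↔
      F ⊆ X ∪ Y ∧ P (F ∩ X, F ∩ Y) := by
  simp only [mem_image, mem_filter, mem_product, mem_powerset, Prod.exists]
  constructor
  · rintro ⟨X', Y', ⟨⟨hX', hY'⟩, hP⟩, rfl⟩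
    refine ⟨union_subset_union hX' hY', ?_⟩
    rwa [union_inter_eq_left_of_disjoint hXY hX' hY', union_comm,
      union_inter_eq_left_of_disjoint hXY.symm hY' hX']
  · rintro ⟨hF, hP⟩
    exact ⟨F ∩ X, F ∩ Y, ⟨⟨inter_subset_right, inter_subset_right⟩, hP⟩,
      by rw [← inter_union_distrib_left, inter_eq_left.2 hF]⟩

end Partition

section TruncPartition

variable {α : Type*} [DecidableEq α] {X Y : Finset α} {p q r : ℕ}

/-- The independent sets of the rank-`r` truncation of the partition matroid on `X ∪ Y` with
capacities `p` on `X` and `q` on `Y`. -/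
def truncPartitionIndep (X Y : Finset α) (p q r : ℕ) : Finset (Finset α) :=
  (X ∪ Y).powerset.filter fun s => #(s ∩ X) ≤ p ∧ #(s ∩ Y) ≤ q ∧ #s ≤ r

theorem mem_truncPartitionIndep {s : Finset α} :
    s ∈ truncPartitionIndep X Y p q r ↔ s ⊆ X ∪ Y ∧ #(s ∩ X) ≤ p ∧ #(s ∩ Y) ≤ q ∧ #s ≤ r := by
  rw [truncPartitionIndep, mem_filter, mem_powerset]

theorem isLowerSet_truncPartitionIndep :
    IsLowerSet (truncPartitionIndep X Y p q r : Set (Finset α)) := by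
  intro s t hts hs
  simp only [mem_coe, mem_truncPartitionIndep] at hs ⊢
  obtain ⟨hsU, hsX, hsY, hs⟩ := hs
  exact ⟨hts.trans hsU, (card_le_card (inter_subset_inter_right hts)).trans hsX,
    (card_le_card (inter_subset_inter_right hts)).trans hsY, (card_le_card hts).trans hs⟩

theorem truncPartitionIndep_comm :
    truncPartitionIndep X Y p q r = truncPartitionIndep Y X q p r := by
  ext s
  simp only [mem_truncPartitionIndep, union_comm X Y]
  tauto

theorem exists_insert_mem_truncPartitionIndep_of_card_inter_lt (hXY : Disjoint X Y)
    {s t : Finset α} (hs : s ∈ truncPartitionIndep X Y p q r)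
    (ht : t ∈ truncPartitionIndep X Y p q r) (hst : #s < #t) (hX : #(s ∩ X) < #(t ∩ X)) :
    ∃ x ∈ t \ s, insert x s ∈ truncPartitionIndep X Y p q r := by
  rw [mem_truncPartitionIndep] at hs ht
  obtain ⟨hsU, hsX, hsY, hsr⟩ := hs
  obtain ⟨htU, htX, -, htr⟩ := ht
  obtain ⟨x, hxtX, hxsX⟩ := not_subset.1 fun h : t ∩ X ⊆ s ∩ X => hX.not_ge (card_le_card h)
  obtain ⟨hxt, hxX⟩ := mem_inter.1 hxtX
  have hxs : x ∉ s := fun h => hxsX (mem_inter.2 ⟨h, hxX⟩)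
  refine ⟨x, mem_sdiff.2 ⟨hxt, hxs⟩,
    mem_truncPartitionIndep.2 ⟨insert_subset (htU hxt) hsU, ?_, ?_, ?_⟩⟩
  · rw [insert_inter_of_mem hxX, card_insert_of_notMem hxsX]; omega
  · rwa [insert_inter_of_notMem (disjoint_left.1 hXY hxX)]
  · rw [card_insert_of_notMem hxs]; omega

theorem hasAugmentation_truncPartitionIndep (hXY : Disjoint X Y) :
    HasAugmentation (truncPartitionIndep X Y p q r) := by
  intro s hs t ht hst
  have hs_split := card_inter_add_card_inter hXY (mem_truncPartitionIndep.1 hs).1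
  have ht_split := card_inter_add_card_inter hXY (mem_truncPartitionIndep.1 ht).1
  by_cases hX : #(s ∩ X) < #(t ∩ X)
  · exact exists_insert_mem_truncPartitionIndep_of_card_inter_lt hXY hs ht hst hX
  · rw [truncPartitionIndep_comm] at hs ht ⊢
    exact exists_insert_mem_truncPartitionIndep_of_card_inter_lt hXY.symm hs ht hst (by omega)

theorem exists_card_eq_mem_truncPartitionIndep (hXY : Disjoint X Y) {a b : ℕ} (hap : a ≤ p)
    (haX : a ≤ #X) (hbq : b ≤ q) (hbY : b ≤ #Y) (hr : a + b = r) :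
    ∃ B ∈ truncPartitionIndep X Y p q r, #B = r := by
  obtain ⟨X', hX', rfl⟩ := exists_subset_card_eq haX
  obtain ⟨Y', hY', rfl⟩ := exists_subset_card_eq hbY
  have hcard : #(X' ∪ Y') = r := by
    rw [card_union_of_disjoint (hXY.mono hX' hY'), hr]
  refine ⟨X' ∪ Y', mem_truncPartitionIndep.2 ⟨union_subset_union hX' hY', ?_, ?_, hcard.le⟩,
    hcard⟩
  · rwa [union_inter_eq_left_of_disjoint hXY hX' hY']
  · rwa [union_comm, union_inter_eq_left_of_disjoint hXY.symm hY' hX']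

theorem mem_image_union_filter_card_iff (hXY : Disjoint X Y) {lam i j : ℕ} (hi : i ≤ lam)
    {F : Finset α} :
    F ∈ ((X.powerset ×ˢ Y.powerset).filter fun p =>
        #p.1 + #p.2 = lam ∧ i ≤ #p.1 ∧ #p.1 ≤ j).image (fun p => p.1 ∪ p.2) ↔
      F ∈ truncPartitionIndep X Y j (lam - i) lam ∧ #F = lam := by
  rw [mem_image_union_filter_powerset_product hXY, mem_truncPartitionIndep]
  dsimp only
  constructor
  · rintro ⟨hF, hsum, hiF, hj⟩
    have := card_inter_add_card_inter hXY hF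
    exact ⟨⟨hF, hj, by omega, by omega⟩, by omega⟩
  · rintro ⟨⟨hF, hj, hY, -⟩, hcard⟩
    have := card_inter_add_card_inter hXY hF
    exact ⟨hF, by omega, by omega, hj⟩

end TruncPartition

theorem stmt3_general {α : Type*} [DecidableEq α] (X Y : Finset α) (hXY : Disjoint X Y)
    (lam : ℕ) (i j : ℕ)
    (h1 : max 0 (lam - Y.card) ≤ i) (h2 : i ≤ j) (h3 : j ≤ min lam X.card)
    (A : Finset (Finset α))
    (hA : A = ((X.powerset ×ˢ Y.powerset).filter fun p =>
        p.1.card + p.2.card = lam ∧ i ≤ p.1.card ∧ p.1.card ≤ j).image fun p => p.1 ∪ p.2)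
    (Δ : Finset (Finset α)) (hΔ : Δ = A.biUnion Finset.powerset) :
    (∀ W : Finset α, ∀ s ∈ Δ, ∀ t ∈ Δ, s ⊆ W → t ⊆ W →
      (∀ u ∈ Δ, u ⊆ W → s ⊆ u → s = u) →
      (∀ u ∈ Δ, u ⊆ W → t ⊆ u → t = u) → s.card = t.card) ∧
    StronglyShellable A := by
  simp only [zero_le, sup_of_le_right, le_inf_iff] at h1 h3
  set M := truncPartitionIndep X Y j (lam - i) lam
  have hM : HasAugmentation M := hasAugmentation_truncPartitionIndep hXY
  have hAM : A = M.filter (#· = lam) := by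
    ext F
    rw [hA, mem_image_union_filter_card_iff hXY (by omega), mem_filter]
  have hΔM : Δ = M := by
    rw [hΔ, hAM]
    exact hM.biUnion_filter_card_powerset isLowerSet_truncPartitionIndep
      (exists_card_eq_mem_truncPartitionIndep hXY h2 (by omega) le_rfl (by omega) (by omega))
      fun s hs => (mem_truncPartitionIndep.1 hs).2.2.2
  have hexchange : ∀ F ∈ A, ∀ G ∈ A, ∀ b ∈ F \ G, ∃ x ∈ G \ F, insert x (F.erase b) ∈ A := by
    rw [hAM]
    exact fun F hF G hG b hb =>
      hM.exists_insert_erase_mem_filter_card isLowerSet_truncPartitionIndep hF hG hb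
  refine ⟨hΔM ▸ fun W s hs t ht => hM.card_eq_of_maximal hs ht, ?_⟩
  -- Any linear order on `α` serves for the colex order; `convert` reconciles its `DecidableEq`
  -- with the given one.
  let _ : LinearOrder α := IsWellOrder.linearOrder WellOrderingRel
  convert stronglyShellable_of_exchange (A := A) ?_
  convert hexchange

/-- For disjoint finite sets X, Y, λ > 0 and max(0, λ-|Y|) ≤ i ≤ j ≤ min(λ, |X|), the family
A_{i,j} of sets X' ∪ Y' with X' ⊆ X, Y' ⊆ Y, |X'| + |Y'| = λ, i ≤ |X'| ≤ j is the facet set of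
a matroid complex (every induced subcomplex of the downward closure is pure), hence is
strongly shellable. -/
theorem stmt3 {α : Type*} [DecidableEq α] (X Y : Finset α) (hXY : Disjoint X Y)
    (lam : ℕ) (hlam : 0 < lam) (i j : ℕ)
    (h1 : max 0 (lam - Y.card) ≤ i) (h2 : i ≤ j) (h3 : j ≤ min lam X.card)
    (A : Finset (Finset α))
    (hA : A = ((X.powerset ×ˢ Y.powerset).filter fun p =>
        p.1.card + p.2.card = lam ∧ i ≤ p.1.card ∧ p.1.card ≤ j).image fun p => p.1 ∪ p.2)
    (Δ : Finset (Finset α)) (hΔ : Δ = A.biUnion Finset.powerset) :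
    (∀ W : Finset α, ∀ s ∈ Δ, ∀ t ∈ Δ, s ⊆ W → t ⊆ W →
      (∀ u ∈ Δ, u ⊆ W → s ⊆ u → s = u) →
      (∀ u ∈ Δ, u ⊆ W → t ⊆ u → t = u) → s.card = t.card) ∧
    StronglyShellable A :=
  stmt3_general X Y hXY lam i j h1 h2 h3 A hA Δ hΔ
end

section
/- Let C be a uniform clutter that is edgewise strongly shellable, and let W be a subset of its vertex set. Then the induced subclutter C_W = {E ∈ E(C) : E ⊆ W} is also edgewise strongly shellable. -/
open scoped Classical

/- Filtering the shelling order keeps it an order; the witness `E_k` for two facets satisfying `p`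
lies in their union, hence survives the filter and stays earlier than `E_j`. -/
theorem StronglyShellable.filter {α : Type*} [DecidableEq α] {F : Finset (Finset α)}
    (hF : StronglyShellable F) (p : Finset α → Prop) [DecidablePred p]
    (hp : ∀ a b c, p a → p b → c ⊆ a ∪ b → p c) : StronglyShellable (F.filter p) := by
  obtain ⟨l, hnd, rfl, hl⟩ := hF
  refine ⟨l.filter (p ·), hnd.filter _, by simp [List.toFinset_filter], ?_⟩
  set l' := l.filter (p ·)
  obtain ⟨f, hf⟩ := List.sublist_iff_exists_fin_orderEmbedding_get_eq.mp
    (List.filter_sublist : l'.Sublist l)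
  have hp' (i : Fin l'.length) : p (l'.get i) := by
    simpa using (List.mem_filter.mp (List.get_mem l' i)).2
  intro i j hij
  obtain ⟨k, hkj, hcard, hinter, hunion⟩ := hl (f i) (f j) (f.strictMono hij)
  have hk_mem : l.get k ∈ l' :=
    List.mem_filter.mpr ⟨List.get_mem l k, by
      simpa [hf] using hp _ _ _ (hp' i) (hp' j) (by rwa [hf i, hf j])⟩
  obtain ⟨k', hk'⟩ := List.get_of_mem hk_mem
  have hfk' : f k' = k := List.nodup_iff_injective_get.mp hnd (by rw [← hf k', hk'])
  refine ⟨k', f.lt_iff_lt.mp (by rwa [hfk']), ?_⟩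
  rw [hf i, hf j, hf k', hfk']
  exact ⟨hcard, hinter, hunion⟩

theorem stmt4_general {α : Type*} [DecidableEq α] (C : Finset (Finset α))
    (hESS : StronglyShellable C) (W : Finset α) :
    StronglyShellable (C.filter fun e => e ⊆ W) :=
  hESS.filter (· ⊆ W) fun _ _ _ ha hb hc => hc.trans (Finset.union_subset ha hb)

/-- If a uniform clutter C is edgewise strongly shellable, then so is the induced subclutter
on any vertex subset W. -/
theorem stmt4 {α : Type*} [DecidableEq α] (C : Finset (Finset α)) (d : ℕ)
    (huniform : ∀ e ∈ C, e.card = d) (hESS : StronglyShellable C) (W : Finset α) :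
    StronglyShellable (C.filter fun e => e ⊆ W) :=
  stmt4_general C hESS W
end

section
/- Let G be a finite simple graph. If the complement graph Ḡ admits a perfect elimination ordering of its vertices, then G is edgewise strongly shellable. -/
/-!
Order the edges of `G` lexicographically by (earlier endpoint, later endpoint) in the
perfect elimination ordering of `Gᶜ`. If an edge `e` precedes `f` and meets it, `e` itself
is the required earlier edge. If they are disjoint, the first vertex `v` of `e` precedes
both endpoints `c, d` of `f`; since `c, d` are not adjacent in `Gᶜ`, the perfect elimination
property forces `v` to be adjacent in `G` to one of them, say `c`, and `{v, c}` precedes `f`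
and differs from it in exactly one vertex.
-/

open scoped Classical

def edgeSets {V : Type*} [Fintype V] [DecidableEq V] (G : SimpleGraph V) [DecidableRel G.Adj] :
    Finset (Finset V) :=
  G.edgeFinset.image (Sym2.lift ⟨fun u v => ({u, v} : Finset V), fun u v => Finset.pair_comm u v⟩)

section Shelling

variable {α β : Type*} [DecidableEq α]

def IsShellingWitness (e f g : Finset α) : Prop :=
  (f \ g).card = 1 ∧ e ∩ f ⊆ g ∧ g ⊆ e ∪ f

theorem stronglyShellable_image [LinearOrder β] (S : Finset β) (φ : β → Finset α)
    (hφ : Set.InjOn φ S)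
    (h : ∀ a ∈ S, ∀ b ∈ S, a < b → ∃ c ∈ S, c < b ∧ IsShellingWitness (φ a) (φ b) (φ c)) :
    StronglyShellable (S.image φ) := by
  have hs : StrictMono S.sort.get := S.sortedLT_sort
  refine ⟨S.sort.map φ, (S.sort_nodup _).map_on fun a ha b hb ↦ hφ (by simpa using ha)
    (by simpa using hb), by ext; simp, fun i j hij ↦ ?_⟩
  obtain ⟨c, hcS, hcj, hw⟩ := h _ ((S.mem_sort _).mp (S.sort.get_mem (i.cast (by simp))))
    _ ((S.mem_sort _).mp (S.sort.get_mem (j.cast (by simp))))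
    (hs (show i.cast _ < j.cast _ from hij))
  obtain ⟨k, rfl⟩ := List.get_of_mem ((S.mem_sort (· ≤ ·)).mpr hcS)
  exact ⟨k.cast (by simp), hs.lt_iff_lt.mp hcj, by simpa [IsShellingWitness] using hw⟩

variable {e f : Finset α}

theorem isShellingWitness_self (he : e.card = 2) (hf : f.card = 2) (hne : e ≠ f)
    (hef : ¬Disjoint e f) : IsShellingWitness e f e := by
  refine ⟨?_, Finset.inter_subset_left, Finset.subset_union_left⟩
  have hpos : 0 < (e ∩ f).card := (Finset.not_disjoint_iff_nonempty_inter.mp hef).card_pos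
  have hssub : e ∩ f ⊂ e := Finset.ssubset_iff_subset_ne.mpr ⟨Finset.inter_subset_left,
    fun h ↦ hne (Finset.eq_of_subset_of_card_le (Finset.inter_eq_left.mp h) (by omega))⟩
  have hlt := Finset.card_lt_card hssub
  rw [Finset.card_sdiff]
  omega

theorem isShellingWitness_insert_of_disjoint {a x : α} (ha : a ∈ e) (hx : x ∈ f)
    (hf : f.card = 2) (hef : Disjoint e f) : IsShellingWitness e f {a, x} := by
  refine ⟨?_, by simp [Finset.disjoint_iff_inter_eq_empty.mp hef], ?_⟩
  · rw [Finset.sdiff_insert_of_notMem (Finset.disjoint_left.mp hef ha),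
      ← Finset.erase_eq, Finset.card_erase_of_mem hx, hf]
  · exact Finset.insert_subset (Finset.mem_union_left f ha)
      (by simpa using Finset.mem_union_right e hx)

end Shelling

theorem Finset.pair_eq_pair_of_lt {V : Type*} [Preorder V] [DecidableEq V] {a b c d : V}
    (hab : a < b) (hcd : c < d) (h : ({a, b} : Finset V) = {c, d}) : a = c ∧ b = d := by
  have := congrArg ((↑) : Finset V → Set V) h
  simp only [Finset.coe_pair, Set.pair_eq_pair_iff] at this
  rcases this with h | ⟨rfl, rfl⟩
  · exact h
  · exact absurd (hab.trans hcd) (lt_irrefl a)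

namespace SimpleGraph

variable {V : Type*}

theorem mem_edgeSets [Fintype V] [DecidableEq V] {G : SimpleGraph V} [DecidableRel G.Adj]
    {e : Finset V} : e ∈ edgeSets G ↔ ∃ a b, G.Adj a b ∧ {a, b} = e := by
  simp [edgeSets, Sym2.exists]

variable [LinearOrder V]

def IsPerfectEliminationOrder (H : SimpleGraph V) : Prop :=
  ∀ ⦃a b c : V⦄, a < b → a < c → b ≠ c → H.Adj a b → H.Adj a c → H.Adj b c

variable {G : SimpleGraph V}

theorem IsPerfectEliminationOrder.adj_or_adj_of_lt (hG : Gᶜ.IsPerfectEliminationOrder)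
    {a c d : V} (hac : a < c) (had : a < d) (hcd : G.Adj c d) : G.Adj a c ∨ G.Adj a d := by
  by_contra! h
  exact (hG hac had hcd.ne ⟨hac.ne, h.1⟩ ⟨had.ne, h.2⟩).2 hcd

def orientedEdges (G : SimpleGraph V) [Fintype V] [DecidableRel G.Adj] : Finset (V ×ₗ V) :=
  {x | (ofLex x).1 < (ofLex x).2 ∧ G.Adj (ofLex x).1 (ofLex x).2}

variable [Fintype V] [DecidableRel G.Adj]

@[simp]
theorem mem_orientedEdges {a b : V} : toLex (a, b) ∈ G.orientedEdges ↔ a < b ∧ G.Adj a b := by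
  simp [orientedEdges]

theorem image_orientedEdges :
    G.orientedEdges.image (fun x ↦ {(ofLex x).1, (ofLex x).2}) = edgeSets G := by
  ext e
  simp only [Finset.mem_image, mem_edgeSets]
  constructor
  · rintro ⟨⟨a, b⟩, hx, rfl⟩
    exact ⟨a, b, (mem_orientedEdges.mp hx).2, rfl⟩
  · rintro ⟨a, b, hab, rfl⟩
    rcases hab.ne.lt_or_gt with h | h
    · exact ⟨toLex (a, b), mem_orientedEdges.mpr ⟨h, hab⟩, rfl⟩
    · exact ⟨toLex (b, a), mem_orientedEdges.mpr ⟨h, hab.symm⟩, Finset.pair_comm b a⟩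

theorem IsPerfectEliminationOrder.exists_isShellingWitness (hG : Gᶜ.IsPerfectEliminationOrder)
    {a b c d : V} (hab : a < b) (hGab : G.Adj a b) (hcd : c < d) (hGcd : G.Adj c d)
    (hlt : toLex (a, b) < toLex (c, d)) :
    ∃ z ∈ G.orientedEdges, z < toLex (c, d) ∧
      IsShellingWitness {a, b} {c, d} {(ofLex z).1, (ofLex z).2} := by
  have hf : ({c, d} : Finset V).card = 2 := Finset.card_pair hcd.ne
  by_cases hdisj : Disjoint ({a, b} : Finset V) {c, d}
  · have hac : a < c := by
      rcases Prod.Lex.toLex_lt_toLex.mp hlt with h | ⟨h, -⟩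
      · exact h
      · exact absurd hdisj (Finset.not_disjoint_iff.mpr ⟨a, by simp, by simp [Or.inl h]⟩)
    have ha : a ∈ ({a, b} : Finset V) := Finset.mem_insert_self a {b}
    rcases hG.adj_or_adj_of_lt hac (hac.trans hcd) hGcd with h | h
    · exact ⟨toLex (a, c), mem_orientedEdges.mpr ⟨hac, h⟩,
        Prod.Lex.toLex_lt_toLex.mpr (.inl hac),
        isShellingWitness_insert_of_disjoint ha (by simp) hf hdisj⟩
    · exact ⟨toLex (a, d), mem_orientedEdges.mpr ⟨hac.trans hcd, h⟩,
        Prod.Lex.toLex_lt_toLex.mpr (.inl hac),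
        isShellingWitness_insert_of_disjoint ha (by simp) hf hdisj⟩
  · refine ⟨toLex (a, b), mem_orientedEdges.mpr ⟨hab, hGab⟩, hlt,
      isShellingWitness_self (Finset.card_pair hab.ne) hf (fun h ↦ hlt.ne ?_) hdisj⟩
    obtain ⟨rfl, rfl⟩ := Finset.pair_eq_pair_of_lt hab hcd h
    rfl

theorem IsPerfectEliminationOrder.stronglyShellable_edgeSets
    (hG : Gᶜ.IsPerfectEliminationOrder) : StronglyShellable (edgeSets G) := by
  rw [← image_orientedEdges]
  refine stronglyShellable_image _ _ (fun x hx y hy h ↦ ?_) (fun x hx y hy hlt ↦ ?_)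
  · obtain ⟨⟨a, b⟩, rfl⟩ := toLex.surjective x
    obtain ⟨⟨c, d⟩, rfl⟩ := toLex.surjective y
    obtain ⟨rfl, rfl⟩ :=
      Finset.pair_eq_pair_of_lt (mem_orientedEdges.mp hx).1 (mem_orientedEdges.mp hy).1 h
    rfl
  · obtain ⟨⟨a, b⟩, rfl⟩ := toLex.surjective x
    obtain ⟨⟨c, d⟩, rfl⟩ := toLex.surjective y
    rw [mem_orientedEdges] at hx hy
    exact hG.exists_isShellingWitness hx.1 hx.2 hy.1 hy.2 hlt

end SimpleGraph

theorem stmt6_general {V : Type*} [Fintype V] [DecidableEq V] (G : SimpleGraph V)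
    [DecidableRel G.Adj] (l : List V) (hall : ∀ v : V, v ∈ l)
    (hpeo : ∀ i j k : Fin l.length, (i : ℕ) < (j : ℕ) → (i : ℕ) < (k : ℕ) → j ≠ k →
      Gᶜ.Adj (l.get i) (l.get j) → Gᶜ.Adj (l.get i) (l.get k) →
      Gᶜ.Adj (l.get j) (l.get k)) :
    StronglyShellable (edgeSets G) := by
  let idx (v : V) : Fin l.length := ⟨l.idxOf v, List.idxOf_lt_length_of_mem (hall v)⟩
  have get_idx (v : V) : l.get (idx v) = v := List.getElem_idxOf _
  have idx_injective : Function.Injective idx := fun v w h ↦ by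
    rw [← get_idx v, ← get_idx w, h]
  let : LinearOrder V := LinearOrder.lift' idx idx_injective
  -- `convert` identifies the `DecidableEq V` instance of this order with the given one.
  convert SimpleGraph.IsPerfectEliminationOrder.stronglyShellable_edgeSets
    fun a b c hab hac hbc ↦ by
      simpa only [get_idx] using hpeo (idx a) (idx b) (idx c) hab hac (idx_injective.ne hbc)

/-- If the complement of G admits a perfect elimination ordering (later neighbors of each
vertex form a clique), then G is edgewise strongly shellable. -/
theorem stmt6 {V : Type*} [Fintype V] [DecidableEq V] (G : SimpleGraph V)
    [DecidableRel G.Adj] (l : List V) (hnd : l.Nodup) (hall : ∀ v : V, v ∈ l)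
    (hpeo : ∀ i j k : Fin l.length, (i : ℕ) < (j : ℕ) → (i : ℕ) < (k : ℕ) → j ≠ k →
      Gᶜ.Adj (l.get i) (l.get j) → Gᶜ.Adj (l.get i) (l.get k) →
      Gᶜ.Adj (l.get j) (l.get k)) :
    StronglyShellable (edgeSets G) :=
  stmt6_general G l hall hpeo
end

section
/- If G is an edgewise strongly shellable finite simple graph, then every two non-adjacent (vertex-disjoint) edges of G are both adjacent to a common third edge; in particular, the complement graph Ḡ contains no induced cycle on 4 vertices. -/
/-!
Let `e`, `f` be two disjoint edges, listed in this order in a strong shelling. The shelling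
supplies an earlier edge `g ⊆ e ∪ f` with `f \ g` a single vertex; as `g` has two vertices,
it keeps the other vertex of `f` and takes one vertex of `e`, so `g` meets both. An induced
4-cycle `a b c d` in `Gᶜ` would give the disjoint edges `ac`, `bd` of `G` with no edge of `G`
between them.
-/

open scoped Classical

namespace StronglyShellable

variable {α : Type*} [DecidableEq α] {F : Finset (Finset α)}

theorem exists_sdiff_card_eq_one (hF : StronglyShellable F) {e f : Finset α}
    (he : e ∈ F) (hf : f ∈ F) (hne : e ≠ f) :
    ∃ g ∈ F, g ⊆ e ∪ f ∧ ((e \ g).card = 1 ∨ (f \ g).card = 1) := by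
  obtain ⟨l, -, rfl, hshell⟩ := hF
  have mem_of_get (k : Fin l.length) : l.get k ∈ l.toFinset :=
    List.mem_toFinset.mpr (List.get_mem l k)
  obtain ⟨i, rfl⟩ := List.mem_iff_get.mp (List.mem_toFinset.mp he)
  obtain ⟨j, rfl⟩ := List.mem_iff_get.mp (List.mem_toFinset.mp hf)
  have hij : (i : ℕ) ≠ j := fun h => hne (congrArg l.get (Fin.ext h))
  rcases lt_or_gt_of_ne hij with hlt | hgt
  · obtain ⟨k, -, hcard, -, hsub⟩ := hshell i j hlt
    exact ⟨l.get k, mem_of_get k, hsub, Or.inr hcard⟩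
  · obtain ⟨k, -, hcard, -, hsub⟩ := hshell j i hgt
    exact ⟨l.get k, mem_of_get k, by rwa [Finset.union_comm], Or.inl hcard⟩

end StronglyShellable

namespace Finset

variable {α : Type*} [DecidableEq α]

theorem inter_nonempty_of_sdiff_card_eq_one {e f g : Finset α} (hgf : g.card = f.card)
    (hf : 2 ≤ f.card) (hfg : (f \ g).card = 1) (hsub : g ⊆ e ∪ f) :
    (g ∩ e).Nonempty ∧ (g ∩ f).Nonempty := by
  have hinter : (g ∩ f).card = f.card - 1 := by
    have := card_inter_add_card_sdiff f g
    rw [inter_comm]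
    omega
  have hgf' : (g \ f).Nonempty := by
    have := card_inter_add_card_sdiff g f
    exact card_pos.mp (by omega)
  obtain ⟨x, hx⟩ := hgf'
  obtain ⟨hxg, hxf⟩ := mem_sdiff.mp hx
  refine ⟨⟨_, mem_inter.mpr ⟨hxg, ?_⟩⟩, card_pos.mp (by omega)⟩
  exact (mem_union.mp (hsub hxg)).resolve_right hxf

end Finset

section edgeSets

variable {V : Type*} [Fintype V] [DecidableEq V] {G : SimpleGraph V} [DecidableRel G.Adj]

theorem mem_edgeSets_iff {e : Finset V} : e ∈ edgeSets G ↔ ∃ u v, G.Adj u v ∧ {u, v} = e := by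
  simp [edgeSets, Sym2.exists]

theorem card_eq_two_of_mem_edgeSets {e : Finset V} (he : e ∈ edgeSets G) : e.card = 2 := by
  obtain ⟨u, v, huv, rfl⟩ := mem_edgeSets_iff.mp he
  exact Finset.card_pair huv.ne

theorem adj_of_mem_edgeSets {e : Finset V} (he : e ∈ edgeSets G) {x y : V} (hx : x ∈ e)
    (hy : y ∈ e) (hxy : x ≠ y) : G.Adj x y := by
  obtain ⟨u, v, huv, rfl⟩ := mem_edgeSets_iff.mp he
  simp only [Finset.mem_insert, Finset.mem_singleton] at hx hy
  rcases hx with rfl | rfl <;> rcases hy with rfl | rfl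
  exacts [absurd rfl hxy, huv, huv.symm, absurd rfl hxy]

theorem StronglyShellable.exists_edge_meeting_of_disjoint (hG : StronglyShellable (edgeSets G))
    {e f : Finset V} (he : e ∈ edgeSets G) (hf : f ∈ edgeSets G) (hef : Disjoint e f) :
    ∃ g ∈ edgeSets G, (g ∩ e).Nonempty ∧ (g ∩ f).Nonempty := by
  have hcard {s : Finset V} (hs : s ∈ edgeSets G) := card_eq_two_of_mem_edgeSets hs
  have hne : e ≠ f := by
    rintro rfl
    simpa [disjoint_self.mp hef] using hcard he
  obtain ⟨g, hg, hsub, he1 | hf1⟩ := hG.exists_sdiff_card_eq_one he hf hne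
  · rw [Finset.union_comm] at hsub
    obtain ⟨hgf, hge⟩ := Finset.inter_nonempty_of_sdiff_card_eq_one
      (by rw [hcard hg, hcard he]) (hcard he).ge he1 hsub
    exact ⟨g, hg, hge, hgf⟩
  · exact ⟨g, hg, Finset.inter_nonempty_of_sdiff_card_eq_one
      (by rw [hcard hg, hcard hf]) (hcard hf).ge hf1 hsub⟩

theorem not_exists_induced_square_compl
    (hG : ∀ e ∈ edgeSets G, ∀ f ∈ edgeSets G, Disjoint e f →
      ∃ g ∈ edgeSets G, (g ∩ e).Nonempty ∧ (g ∩ f).Nonempty) :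
    ¬ ∃ a b c d : V, a ≠ c ∧ b ≠ d ∧
        Gᶜ.Adj a b ∧ Gᶜ.Adj b c ∧ Gᶜ.Adj c d ∧ Gᶜ.Adj d a ∧
        ¬ Gᶜ.Adj a c ∧ ¬ Gᶜ.Adj b d := by
  rintro ⟨a, b, c, d, hac, hbd, hab, hbc, hcd, hda, hnac, hnbd⟩
  have hcompl {x y : V} (hx : x ∈ ({a, c} : Finset V)) (hy : y ∈ ({b, d} : Finset V)) :
      Gᶜ.Adj x y := by
    simp only [Finset.mem_insert, Finset.mem_singleton] at hx hy
    rcases hx with rfl | rfl <;> rcases hy with rfl | rfl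
    exacts [hab, hda.symm, hbc.symm, hcd]
  have hedge {x y : V} (hxy : x ≠ y) (hn : ¬ Gᶜ.Adj x y) : {x, y} ∈ edgeSets G :=
    mem_edgeSets_iff.mpr ⟨x, y, by simpa [SimpleGraph.compl_adj, hxy] using hn, rfl⟩
  have hdisj : Disjoint ({a, c} : Finset V) {b, d} :=
    Finset.disjoint_left.mpr fun _ hx hy => (hcompl hx hy).ne rfl
  obtain ⟨g, hg, ⟨x, hx⟩, ⟨y, hy⟩⟩ := hG _ (hedge hac hnac) _ (hedge hbd hnbd) hdisj
  rw [Finset.mem_inter] at hx hy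
  exact (hcompl hx.2 hy.2).2 (adj_of_mem_edgeSets hg hx.1 hy.1 (hcompl hx.2 hy.2).ne)

end edgeSets

/-- In an ESS graph, any two vertex-disjoint edges are both adjacent to a common third edge;
in particular the complement graph contains no induced 4-cycle. -/
theorem stmt7 {V : Type*} [Fintype V] [DecidableEq V] (G : SimpleGraph V)
    [DecidableRel G.Adj] (hESS : StronglyShellable (edgeSets G)) :
    (∀ e₁ ∈ edgeSets G, ∀ e₂ ∈ edgeSets G, Disjoint e₁ e₂ →
        ∃ e₃ ∈ edgeSets G, (e₃ ∩ e₁).Nonempty ∧ (e₃ ∩ e₂).Nonempty) ∧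
    ¬ ∃ a b c d : V, a ≠ c ∧ b ≠ d ∧
        Gᶜ.Adj a b ∧ Gᶜ.Adj b c ∧ Gᶜ.Adj c d ∧ Gᶜ.Adj d a ∧
        ¬ Gᶜ.Adj a c ∧ ¬ Gᶜ.Adj b d := by
  have hlinked : ∀ e₁ ∈ edgeSets G, ∀ e₂ ∈ edgeSets G, Disjoint e₁ e₂ →
      ∃ e₃ ∈ edgeSets G, (e₃ ∩ e₁).Nonempty ∧ (e₃ ∩ e₂).Nonempty :=
    fun _ he₁ _ he₂ => hESS.exists_edge_meeting_of_disjoint he₁ he₂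
  exact ⟨hlinked, not_exists_induced_square_compl hlinked⟩
end

section
/- Let T be a tree with at least 3 vertices and G_T its generic graph. Then G_T is connected and its diameter equals 3. -/
open scoped Classical

abbrev GenericVertex {V : Type*} (T : SimpleGraph V) : Type _ := {p : V × V // T.Adj p.1 p.2}

/-- The generic graph of a tree T: vertices are ordered pairs (i,k) with {i,k} ∈ E(T)
(representing x_{i,k}); x_{i,k} is adjacent to x_{j,l} iff on the unique path in T from i
to j, the second vertex is k and the second-to-last vertex is l. -/
def genericGraph {V : Type*} [DecidableEq V] (T : SimpleGraph V) : SimpleGraph (GenericVertex T) :=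
  SimpleGraph.fromRel fun a b =>
    ∃ w : T.Walk a.val.1 b.val.1, w.IsPath ∧ 0 < w.length ∧
      w.support[1]? = some a.val.2 ∧ w.support.reverse[1]? = some b.val.2

/-!
Every vertex `x_{i,k}` is adjacent to its flip `x_{k,i}`. Given two edges of the tree, orient each
so that the tree path joining them starts with the first and ends with the second: the oriented
vertices are adjacent, so any two vertices are at distance at most `1 + 1 + 1`. Conversely, in a
tree a neighbour `x_{j,l}` of `x_{i,k}` determines `k` as the second vertex of the path from `i`
to `j`. Hence if `y` has distinct neighbours `x` and `z` in `T` (such `y` exists once `T` has three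
vertices), then `x_{y,x}` and `x_{y,z}` are distinct, not adjacent, and have no common neighbour.
-/

open SimpleGraph Walk

namespace SimpleGraph

variable {V : Type*} {G : SimpleGraph V} {u v : V}

lemma Walk.support_getElem?_one {p : G.Walk u v} (hp : ¬p.Nil) : p.support[1]? = some p.snd :=
  (p.getVert_eq_support_getElem? (not_nil_iff_lt_length.mp hp)).symm

lemma Walk.support_reverse_getElem?_one {p : G.Walk u v} (hp : ¬p.Nil) :
    p.support.reverse[1]? = some p.penultimate := by
  rw [← support_reverse, support_getElem?_one (by simpa using hp), snd_reverse]

lemma Walk.not_nil_of_snd_ne {p : G.Walk u v} (h : p.snd ≠ u) : ¬p.Nil :=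
  fun hp => h (by cases hp; rfl)

lemma Walk.IsPath.ne_of_not_nil {p : G.Walk u v} (hp : p.IsPath) (h : ¬p.Nil) : u ≠ v := by
  rintro rfl
  exact h (isPath_iff_nil.mp hp)

lemma IsAcyclic.snd_eq_or_isPath_cons (hG : G.IsAcyclic) {w : V} {p : G.Walk u v}
    (hp : p.IsPath) (huw : G.Adj u w) : p.snd = w ∨ (cons huw.symm p).IsPath := by
  by_cases hw : w ∈ p.support
  · exact Or.inl (hG.eq_snd_of_adj_start hp huw hw).symm
  · exact Or.inr (hp.cons hw)

lemma Connected.exists_adj_adj_ne_of_not_adj (hG : G.Connected) (hne : u ≠ v)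
    (hadj : ¬G.Adj u v) : ∃ x y z, G.Adj x y ∧ G.Adj y z ∧ x ≠ z := by
  obtain ⟨p, hp⟩ := (hG u v).exists_walk_length_eq_dist
  have hdist : 1 < G.dist u v := by
    have h0 : G.dist u v ≠ 0 := dist_ne_zero_iff_ne_and_reachable.mpr ⟨hne, hG u v⟩
    have h1 : G.dist u v ≠ 1 := mt dist_eq_one_iff_adj.mp hadj
    omega
  obtain ⟨x, y, z, hxy, hyz, -, hxz⟩ := p.exists_adj_adj_not_adj_ne hp hdist
  exact ⟨x, y, z, hxy, hyz, hxz⟩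

lemma Connected.exists_adj_adj_ne [Fintype V] (hG : G.Connected) (h3 : 3 ≤ Fintype.card V) :
    ∃ x y z, G.Adj x y ∧ G.Adj y z ∧ x ≠ z := by
  obtain ⟨a, b, c, hab, hac, hbc⟩ := Fintype.two_lt_card_iff.mp h3
  by_cases hb : G.Adj a b
  · by_cases hc : G.Adj a c
    · exact ⟨b, a, c, hb.symm, hc, hbc⟩
    · exact hG.exists_adj_adj_ne_of_not_adj hac hc
  · exact hG.exists_adj_adj_ne_of_not_adj hab hb

end SimpleGraph

section GenericGraph

variable {V : Type*} {T : SimpleGraph V}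

def GenericVertex.flip (a : GenericVertex T) : GenericVertex T := ⟨a.val.swap, a.prop.symm⟩

variable [DecidableEq V]

lemma genericGraph_adj_iff {a b : GenericVertex T} :
    (genericGraph T).Adj a b ↔
      ∃ w : T.Walk a.val.1 b.val.1, w.IsPath ∧ w.snd = a.val.2 ∧ w.penultimate = b.val.2 := by
  have of_support {x y : GenericVertex T} {w : T.Walk x.val.1 y.val.1} (hlen : 0 < w.length)
      (hsnd : w.support[1]? = some x.val.2) (hpen : w.support.reverse[1]? = some y.val.2) :
      w.snd = x.val.2 ∧ w.penultimate = y.val.2 := by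
    have hw0 : ¬w.Nil := not_nil_iff_lt_length.mpr hlen
    rw [w.support_getElem?_one hw0, Option.some_inj] at hsnd
    rw [w.support_reverse_getElem?_one hw0, Option.some_inj] at hpen
    exact ⟨hsnd, hpen⟩
  rw [genericGraph, fromRel_adj]
  constructor
  · rintro ⟨-, ⟨w, hw, hlen, hsnd, hpen⟩ | ⟨w, hw, hlen, hsnd, hpen⟩⟩
    · exact ⟨w, hw, of_support hlen hsnd hpen⟩
    · obtain ⟨hsnd, hpen⟩ := of_support hlen hsnd hpen
      exact ⟨w.reverse, hw.reverse, by rwa [snd_reverse], by rwa [penultimate_reverse]⟩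
  · rintro ⟨w, hw, hsnd, hpen⟩
    have hw0 : ¬w.Nil := not_nil_of_snd_ne (hsnd ▸ a.prop.ne')
    refine ⟨fun hab => hw.ne_of_not_nil hw0 (by rw [hab]),
      Or.inl ⟨w, hw, not_nil_iff_lt_length.mp hw0, ?_, ?_⟩⟩
    · rw [w.support_getElem?_one hw0, hsnd]
    · rw [w.support_reverse_getElem?_one hw0, hpen]

lemma genericGraph_adj_flip (a : GenericVertex T) : (genericGraph T).Adj a a.flip :=
  genericGraph_adj_iff.mpr ⟨a.prop.toWalk, (Path.singleton a.prop).property, rfl, rfl⟩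

lemma fst_ne_of_genericGraph_adj {a b : GenericVertex T} (h : (genericGraph T).Adj a b) :
    a.val.1 ≠ b.val.1 := by
  obtain ⟨w, hw, hsnd, -⟩ := genericGraph_adj_iff.mp h
  exact hw.ne_of_not_nil (not_nil_of_snd_ne (hsnd ▸ a.prop.ne'))

namespace SimpleGraph.IsAcyclic

lemma eq_of_genericGraph_adj_of_fst_eq (hT : T.IsAcyclic) {a b c : GenericVertex T}
    (ha : (genericGraph T).Adj a c) (hb : (genericGraph T).Adj b c) (hab : a.val.1 = b.val.1) :
    a = b := by
  obtain ⟨⟨i, k⟩, hik⟩ := a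
  obtain ⟨⟨j, l⟩, hjl⟩ := b
  obtain ⟨v, hv, hvk, -⟩ := genericGraph_adj_iff.mp ha
  obtain ⟨w, hw, hwl, -⟩ := genericGraph_adj_iff.mp hb
  dsimp only at hab hv hvk hw hwl v w
  subst hab
  have hvw : v = w := congrArg Subtype.val ((hT.subsingleton_path _ _).elim ⟨v, hv⟩ ⟨w, hw⟩)
  rw [hvw, hwl] at hvk
  subst hvk
  rfl

lemma three_le_edist_genericGraph (hT : T.IsAcyclic) {a b : GenericVertex T} (hne : a ≠ b)
    (hab : a.val.1 = b.val.1) : 3 ≤ (genericGraph T).edist a b := by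
  have h2 : 2 < (genericGraph T).edist a b := by
    refine two_lt_edist_iff.mpr ⟨hne, fun h => fst_ne_of_genericGraph_adj h hab, ?_⟩
    refine Set.eq_empty_of_forall_notMem fun c hc => hne ?_
    rw [mem_commonNeighbors] at hc
    exact hT.eq_of_genericGraph_adj_of_fst_eq hc.1 hc.2 hab
  exact Order.add_one_le_of_lt h2

end SimpleGraph.IsAcyclic

namespace SimpleGraph.IsTree

lemma exists_isPath_snd_eq (hT : T.IsTree) (a : GenericVertex T) (j : V) :
    ∃ a', (a' = a ∨ a' = a.flip) ∧ ∃ p : T.Walk a'.val.1 j, p.IsPath ∧ p.snd = a'.val.2 := by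
  obtain ⟨p, hp⟩ := (hT.connected a.val.1 j).some.toPath
  rcases hT.isAcyclic.snd_eq_or_isPath_cons hp a.prop with hsnd | hcons
  · exact ⟨a, Or.inl rfl, p, hp, hsnd⟩
  · exact ⟨a.flip, Or.inr rfl, _, hcons, snd_cons _ _⟩

lemma exists_genericGraph_adj_up_to_flip (hT : T.IsTree) (a b : GenericVertex T) :
    ∃ a' b', (a' = a ∨ a' = a.flip) ∧ (b' = b ∨ b' = b.flip) ∧ (genericGraph T).Adj a' b' := by
  obtain ⟨a', ha', p, hp, hsnd⟩ := hT.exists_isPath_snd_eq a b.val.1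
  have hp0 : ¬p.Nil := not_nil_of_snd_ne (hsnd ▸ a'.prop.ne')
  rcases hT.isAcyclic.snd_eq_or_isPath_cons hp.reverse b.prop with hpen | hcons
  · rw [snd_reverse] at hpen
    exact ⟨a', b, ha', Or.inl rfl, genericGraph_adj_iff.mpr ⟨p, hp, hsnd, hpen⟩⟩
  · set q := (cons b.prop.symm p.reverse).reverse
    have hq_snd : q.snd = a'.val.2 := by
      rw [snd_reverse, penultimate_cons_of_not_nil _ _ (by simpa using hp0), penultimate_reverse,
        hsnd]
    have hq_pen : q.penultimate = b.val.1 := by rw [penultimate_reverse, snd_cons]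
    exact ⟨a', b.flip, ha', Or.inr rfl, genericGraph_adj_iff.mpr ⟨q, hcons.reverse, hq_snd, hq_pen⟩⟩

lemma edist_genericGraph_le_three (hT : T.IsTree) (a b : GenericVertex T) :
    (genericGraph T).edist a b ≤ 3 := by
  have hflip {c c' : GenericVertex T} (h : c' = c ∨ c' = c.flip) :
      (genericGraph T).edist c c' ≤ 1 := by
    refine edist_le_one_iff_adj_or_eq.mpr ?_
    rcases h with rfl | rfl
    exacts [Or.inr rfl, Or.inl (genericGraph_adj_flip c)]
  obtain ⟨a', b', ha', hb', hadj⟩ := hT.exists_genericGraph_adj_up_to_flip a b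
  calc (genericGraph T).edist a b
      ≤ (genericGraph T).edist a a' + (genericGraph T).edist a' b' +
          (genericGraph T).edist b' b :=
        SimpleGraph.edist_triangle.trans (add_le_add_left SimpleGraph.edist_triangle _)
    _ ≤ 1 + 1 + 1 := by
        gcongr
        · exact hflip ha'
        · exact (edist_eq_one_iff_adj.mpr hadj).le
        · rw [SimpleGraph.edist_comm]
          exact hflip hb'
    _ = 3 := by norm_num

lemma ediam_genericGraph [Fintype V] (hT : T.IsTree) (h3 : 3 ≤ Fintype.card V) :
    (genericGraph T).ediam = 3 := by
  obtain ⟨x, y, z, hxy, hyz, hxz⟩ := hT.connected.exists_adj_adj_ne h3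
  let a : GenericVertex T := ⟨(y, x), hxy.symm⟩
  let b : GenericVertex T := ⟨(y, z), hyz⟩
  have hab : a ≠ b := fun h => hxz (congrArg (fun c : GenericVertex T => c.val.2) h)
  refine le_antisymm (ediam_le_of_edist_le hT.edist_genericGraph_le_three) ?_
  exact (hT.isAcyclic.three_le_edist_genericGraph hab rfl).trans edist_le_ediam

end SimpleGraph.IsTree

end GenericGraph

theorem stmt9_general {V : Type*} [Fintype V] [DecidableEq V] (T : SimpleGraph V)
    (hT : T.IsTree) (h3 : 3 ≤ Fintype.card V) :
    (genericGraph T).Connected ∧ (genericGraph T).diam = 3 := by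
  have hediam := hT.ediam_genericGraph h3
  have : Nontrivial (GenericVertex T) := nontrivial_of_ediam_ne_zero (by rw [hediam]; decide)
  exact ⟨connected_of_ediam_ne_top (by rw [hediam]; decide), by simp [diam, hediam]⟩

/-- The generic graph of a tree with at least 3 vertices is connected of diameter 3. -/
theorem stmt9 {V : Type*} [Fintype V] [DecidableEq V] (T : SimpleGraph V) [DecidableRel T.Adj]
    (hT : T.IsTree) (h3 : 3 ≤ Fintype.card V) :
    (genericGraph T).Connected ∧ (genericGraph T).diam = 3 :=
  stmt9_general T hT h3
end

section
/- Let T be a tree and G_T its generic graph. Then the following three numbers are equal: the clique number of G_T, the number of leaves of G_T, and the number of leaves of T. -/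
open scoped Classical

/-!
Write `π(i, j)` for the unique path from `i` to `j` in `T`. The vertex `x_{i,k}` is adjacent
to `x_{k,i}` and to `x_{m,k}` for every other neighbour `m` of `k`, while if `k` is a leaf,
a path starting `i, k` ends at `k`, so `x_{k,i}` is the only neighbour. Hence the leaves of `G_T` are
the `x_{i,k}` with `k` a leaf of `T`, one for each leaf of `T`.

The `x_{ℓ,k}` with `ℓ` a leaf of `T` form a clique of that size. Conversely, send `x_{i,k}`
to a leaf `ℓ` with `π(i, ℓ)` not starting with `k`. If `x_{i,k}` and `x_{j,l}` are adjacent,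
then `π(j, ℓ)` runs through `i`, so it starts with `l`; thus `x_{j,l}` is never sent to `ℓ`,
and the map is injective on cliques.
-/

lemma SimpleGraph.Walk.support_getElem?_one_s10 {V : Type*} {G : SimpleGraph V} {u v : V}
    {p : G.Walk u v} (hp : ¬p.Nil) : p.support[1]? = some p.snd := by
  rw [snd_eq_support_getElem_one hp, List.getElem?_eq_getElem]

namespace SimpleGraph.IsTree

open Walk

variable {V : Type*} {T : SimpleGraph V} (hT : T.IsTree)

noncomputable def path (u v : V) : T.Walk u v :=
  (hT.existsUnique_path u v).exists.choose

lemma isPath_path (u v : V) : (hT.path u v).IsPath :=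
  (hT.existsUnique_path u v).exists.choose_spec

lemma eq_path {u v : V} {p : T.Walk u v} (hp : p.IsPath) : p = hT.path u v :=
  (hT.existsUnique_path u v).unique hp (hT.isPath_path u v)

lemma path_self (u : V) : hT.path u u = nil :=
  (hT.eq_path IsPath.nil).symm

lemma reverse_path (u v : V) : (hT.path u v).reverse = hT.path v u :=
  hT.eq_path (hT.isPath_path u v).reverse

lemma snd_path_of_adj {u v : V} (h : T.Adj u v) : (hT.path u v).snd = v := by
  rw [← hT.eq_path h.isPath_toWalk]
  rfl

lemma adj_snd_path {u v : V} (h : u ≠ v) : T.Adj u (hT.path u v).snd :=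
  adj_snd (not_nil_of_ne h)

lemma notMem_support_path_snd {u v : V} (h : u ≠ v) :
    u ∉ (hT.path (hT.path u v).snd v).support := by
  have hp := hT.isPath_path u v
  rw [← cons_tail_eq (hT.path u v) (not_nil_of_ne h), cons_isPath_iff] at hp
  rw [← hT.eq_path hp.1]
  exact hp.2

lemma exists_isPath_support_getElem?_iff {i j k l : V} :
    (∃ w : T.Walk i j, w.IsPath ∧ 0 < w.length ∧
      w.support[1]? = some k ∧ w.support.reverse[1]? = some l) ↔
    i ≠ j ∧ (hT.path i j).snd = k ∧ (hT.path j i).snd = l := by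
  constructor
  · rintro ⟨w, hw, hpos, hk, hl⟩
    obtain rfl := hT.eq_path hw
    have hij : i ≠ j := fun h => by subst h; simp [hT.path_self] at hpos
    rw [← support_reverse, hT.reverse_path] at hl
    rw [support_getElem?_one_s10 (not_nil_of_ne hij)] at hk
    rw [support_getElem?_one_s10 (not_nil_of_ne hij.symm)] at hl
    exact ⟨hij, Option.some_injective _ hk, Option.some_injective _ hl⟩
  · rintro ⟨hij, rfl, rfl⟩
    refine ⟨hT.path i j, hT.isPath_path i j, ?_, support_getElem?_one_s10 (not_nil_of_ne hij), ?_⟩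
    · exact Nat.pos_of_ne_zero fun h0 => hij (eq_of_length_eq_zero h0)
    · rw [← support_reverse, hT.reverse_path, support_getElem?_one_s10 (not_nil_of_ne hij.symm)]

variable [DecidableEq V]

lemma snd_path_of_mem_support {u v w : V} (hw : w ∈ (hT.path u v).support) (hwu : w ≠ u) :
    (hT.path u w).snd = (hT.path u v).snd := by
  rw [← hT.eq_path ((hT.isPath_path u v).takeUntil hw), snd_takeUntil hwu]

lemma isPath_append_of_snd_ne {u v w : V} (h : (hT.path u v).snd ≠ (hT.path u w).snd) :
    ((hT.path v u).append (hT.path u w)).IsPath := by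
  rw [isPath_def, support_append, List.nodup_append]
  refine ⟨(hT.isPath_path v u).support_nodup, (hT.isPath_path u w).support_nodup.sublist
    (List.tail_sublist _), fun x hxv y hyw hxy => ?_⟩
  subst hxy
  have hxu : x ≠ u := by
    rintro rfl
    have := (hT.isPath_path x w).support_nodup
    rw [← cons_tail_support] at this
    exact (List.nodup_cons.mp this).1 hyw
  rw [← hT.reverse_path, support_reverse, List.mem_reverse] at hxv
  exact h ((hT.snd_path_of_mem_support hxv hxu).symm.trans
    (hT.snd_path_of_mem_support (List.mem_of_mem_tail hyw) hxu))

lemma snd_path_of_snd_ne {u v w : V} (huv : u ≠ v) (h : (hT.path u v).snd ≠ (hT.path u w).snd) :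
    (hT.path v w).snd = (hT.path v u).snd := by
  have hpos : 1 ≤ (hT.path v u).length :=
    Nat.one_le_iff_ne_zero.mpr fun h0 => huv (eq_of_length_eq_zero h0).symm
  rw [← hT.eq_path (hT.isPath_append_of_snd_ne h), snd, getVert_append', if_pos hpos]

lemma exists_degree_eq_one_snd_path_ne [Fintype V] [DecidableRel T.Adj] {u w : V}
    (h : T.Adj u w) : ∃ ℓ, T.degree ℓ = 1 ∧ (hT.path u ℓ).snd ≠ w := by
  -- a vertex farthest from `w` among those whose path from `w` runs through `u`
  obtain ⟨ℓ, hℓ, hmax⟩ := (Finset.univ.filter fun v => u ∈ (hT.path w v).support).exists_max_image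
    (fun v => (hT.path w v).length) ⟨u, by simp⟩
  simp only [Finset.mem_filter, Finset.mem_univ, true_and] at hℓ hmax
  refine ⟨ℓ, ?_, fun hsnd => ?_⟩
  · have hwℓ : w ≠ ℓ := by
      rintro rfl
      simp [hT.path_self, h.ne] at hℓ
    have hnil := not_nil_of_ne (p := hT.path w ℓ) hwℓ
    refine degree_eq_one_iff_existsUnique_adj.mpr
      ⟨_, (adj_penultimate hnil).symm, fun m hm => by_contra fun hne => ?_⟩
    have hm' : m ∉ (hT.path w ℓ).support := fun hmem =>
      hne (hT.isAcyclic.eq_penultimate_of_adj_end (hT.isPath_path w ℓ) hm hmem)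
    have hconcat := hT.eq_path ((hT.isPath_path w ℓ).concat hm' hm)
    have := hmax m (by rw [← hconcat]; exact support_subset_support_concat _ _ hℓ)
    rw [← hconcat, length_concat] at this
    omega
  · have huℓ : u ≠ ℓ := by
      rintro rfl
      rw [hT.path_self] at hsnd
      exact h.ne hsnd
    exact hT.notMem_support_path_snd huℓ (hsnd ▸ hℓ)

end SimpleGraph.IsTree

lemma SimpleGraph.card_genericVertex_degree_fst_eq_one {V : Type*} [Fintype V]
    (G : SimpleGraph V) [DecidableRel G.Adj] :
    Fintype.card {a : GenericVertex G // G.degree a.1.1 = 1} =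
      Fintype.card {v : V // G.degree v = 1} := by
  refine Fintype.card_of_bijective (f := fun a => ⟨a.1.1.1, a.2⟩)
    ⟨fun ⟨⟨⟨i, k⟩, hik⟩, hi⟩ ⟨⟨⟨j, l⟩, hjl⟩, _⟩ hij => ?_, fun ⟨v, hv⟩ => ?_⟩
  · obtain rfl : i = j := congrArg Subtype.val hij
    obtain rfl := (degree_eq_one_iff_existsUnique_adj.mp hi).unique hik hjl
    rfl
  · obtain ⟨w, hw, -⟩ := degree_eq_one_iff_existsUnique_adj.mp hv
    exact ⟨⟨⟨(v, w), hw⟩, hv⟩, rfl⟩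

section GenericGraph

open SimpleGraph Walk

variable {V : Type*} [DecidableEq V] {T : SimpleGraph V}

lemma genericGraph_adj_iff_s10 (hT : T.IsTree) {a b : GenericVertex T} :
    (genericGraph T).Adj a b ↔ a.1.1 ≠ b.1.1 ∧
      (hT.path a.1.1 b.1.1).snd = a.1.2 ∧ (hT.path b.1.1 a.1.1).snd = b.1.2 := by
  rw [genericGraph, fromRel_adj, hT.exists_isPath_support_getElem?_iff,
    hT.exists_isPath_support_getElem?_iff]
  constructor
  · rintro ⟨-, h | ⟨hij, hk, hl⟩⟩
    · exact h
    · exact ⟨hij.symm, hl, hk⟩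
  · rintro h
    exact ⟨fun hab => h.1 (by rw [hab]), Or.inl h⟩

lemma genericGraph_adj_swap (hT : T.IsTree) (a : GenericVertex T) :
    (genericGraph T).Adj a ⟨a.1.swap, a.2.symm⟩ :=
  (genericGraph_adj_iff_s10 hT).mpr ⟨a.2.ne, hT.snd_path_of_adj a.2, hT.snd_path_of_adj a.2.symm⟩

lemma genericGraph_degree_eq_one_iff [Fintype V] [DecidableRel T.Adj] (hT : T.IsTree)
    (a : GenericVertex T) : (genericGraph T).degree a = 1 ↔ T.degree a.1.2 = 1 := by
  obtain ⟨⟨i, k⟩, hik⟩ := a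
  rw [degree_eq_one_iff_existsUnique_adj, degree_eq_one_iff_existsUnique_adj]
  constructor
  · rintro ⟨b, -, hb⟩
    refine ⟨i, hik.symm, fun m hkm => by_contra fun hmi => ?_⟩
    have hadj : (genericGraph T).Adj ⟨(i, k), hik⟩ ⟨(m, k), hkm.symm⟩ := by
      have hpath : (cons hik (cons hkm nil)).IsPath := by
        simp [hik.ne, hkm.ne, Ne.symm hmi]
      refine (genericGraph_adj_iff_s10 hT).mpr ⟨Ne.symm hmi, ?_, ?_⟩
      · rw [← hT.eq_path hpath]; rfl
      · rw [← hT.eq_path hpath.reverse]; rfl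
    have := (hb _ hadj).trans (hb _ (genericGraph_adj_swap hT _)).symm
    exact hkm.ne (congrArg (fun c : GenericVertex T => c.1.1) this).symm
  · rintro hk
    refine ⟨_, genericGraph_adj_swap hT _, fun ⟨⟨j, l⟩, hjl⟩ hadj => ?_⟩
    obtain ⟨hij, hsnd, hl⟩ := (genericGraph_adj_iff_s10 hT).mp hadj
    obtain rfl : k = j := by
      by_contra hkj
      have hi : (hT.path k j).snd = i := hk.unique (hT.adj_snd_path hkj) hik.symm
      have := hT.notMem_support_path_snd hij
      rw [hsnd] at this
      exact this (hi ▸ (hT.path k j).getVert_mem_support 1)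
    obtain rfl : i = l := (hT.snd_path_of_adj hik.symm).symm.trans hl
    rfl

lemma snd_path_eq_of_genericGraph_adj (hT : T.IsTree) {a b : GenericVertex T}
    (hab : (genericGraph T).Adj a b) {ℓ : V} (hℓ : (hT.path a.1.1 ℓ).snd ≠ a.1.2) :
    (hT.path b.1.1 ℓ).snd = b.1.2 := by
  obtain ⟨hij, hk, hl⟩ := (genericGraph_adj_iff_s10 hT).mp hab
  rw [hT.snd_path_of_snd_ne hij (hk ▸ Ne.symm hℓ), hl]

lemma card_le_of_isClique_genericGraph [Fintype V] [DecidableRel T.Adj] (hT : T.IsTree)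
    {s : Finset (GenericVertex T)} (hs : (genericGraph T).IsClique s) :
    s.card ≤ Fintype.card {v : V // T.degree v = 1} := by
  choose leaf hleaf haway using fun a : GenericVertex T => hT.exists_degree_eq_one_snd_path_ne a.2
  rw [Fintype.card_subtype]
  refine Finset.card_le_card_of_injOn leaf (fun a _ => by simp [hleaf]) fun a ha b hb hab => ?_
  by_contra hne
  exact haway b (hab ▸ snd_path_eq_of_genericGraph_adj hT (hs ha hb hne) (haway a))

lemma isClique_genericGraph_setOf_degree_fst_eq_one [Fintype V] [DecidableRel T.Adj]
    (hT : T.IsTree) : (genericGraph T).IsClique {a | T.degree a.1.1 = 1} := by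
  rintro ⟨⟨i, k⟩, hik⟩ hi ⟨⟨j, l⟩, hjl⟩ hj hne
  rw [Set.mem_ofPred_eq, degree_eq_one_iff_existsUnique_adj] at hi hj
  have hij : i ≠ j := by
    rintro rfl
    obtain rfl := hi.unique hik hjl
    exact hne rfl
  exact (genericGraph_adj_iff_s10 hT).mpr ⟨hij, hi.unique (hT.adj_snd_path hij) hik,
    hj.unique (hT.adj_snd_path hij.symm) hjl⟩

end GenericGraph

section Counting

variable {V : Type*} [Fintype V] [DecidableEq V] {T : SimpleGraph V} [DecidableRel T.Adj]

lemma card_genericGraph_degree_eq_one (hT : T.IsTree) :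
    Fintype.card {a : GenericVertex T // (genericGraph T).degree a = 1} =
      Fintype.card {v : V // T.degree v = 1} := by
  rw [← T.card_genericVertex_degree_fst_eq_one]
  exact Fintype.card_congr <| (Equiv.subtypeEquiv (Equiv.prodComm V V) fun _ => T.adj_comm _ _)
    |>.subtypeEquiv (genericGraph_degree_eq_one_iff hT)

lemma cliqueNum_genericGraph (hT : T.IsTree) :
    (genericGraph T).cliqueNum = Fintype.card {v : V // T.degree v = 1} := by
  refine le_antisymm ?_ ?_
  · obtain ⟨s, hs⟩ := (genericGraph T).exists_isNClique_cliqueNum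
    exact hs.card_eq ▸ card_le_of_isClique_genericGraph hT hs.isClique
  · rw [← T.card_genericVertex_degree_fst_eq_one, Fintype.card_subtype]
    refine SimpleGraph.IsClique.card_le_cliqueNum (tc := ?_)
    simpa using isClique_genericGraph_setOf_degree_fst_eq_one hT

end Counting

/-- The clique number of the generic graph of a tree T equals the number of leaves of the
generic graph, which equals the number of leaves of T. -/
theorem stmt10 {V : Type*} [Fintype V] [DecidableEq V] (T : SimpleGraph V) [DecidableRel T.Adj]
    (hT : T.IsTree) :
    (genericGraph T).cliqueNum =
        Fintype.card {v : GenericVertex T // (genericGraph T).degree v = 1} ∧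
    Fintype.card {v : GenericVertex T // (genericGraph T).degree v = 1} =
        Fintype.card {v : V // T.degree v = 1} :=
  ⟨(cliqueNum_genericGraph hT).trans (card_genericGraph_degree_eq_one hT).symm,
    card_genericGraph_degree_eq_one hT⟩
end

section
/- For any tree T, the generic graph G_T is edgewise strongly shellable. -/
open scoped Classical

/-!
Root the tree at `r` and order its vertices so that deeper vertices come first. Each pair of
distinct vertices `a, b` of `T` gives exactly one edge of `G_T`, joining `x_{a,a'}` and `x_{b,b'}`
where `a'` is the first step from `a` towards `b` and `b'` the first step from `b` towards `a`.
If `a` precedes `b`, then `b` is not deeper than `a`, so `a'` is the parent of `a`. Order the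
edges lexicographically by `(a, b)` with `a` preceding `b`. An earlier edge meeting a later one
is its own witness. If `(a, b)` precedes `(p, q)` and the two edges are disjoint, then `a`
precedes `p`. The path from `p` to `a` starts towards `q`, or the path from `q` to `a` starts
towards `p` (otherwise each of `p`, `q` would lie on the path from the other one to `a`).
Accordingly the edge `(a, p)` or `(a, q)` consists of `x_{a,a'}` and a vertex of the edge
`(p, q)`, and it is the required earlier edge.
-/

open Finset

theorem StronglyShellable.of_fin {α : Type*} [DecidableEq α] {n : ℕ} (σ : Fin n → Finset α)
    (hσ : Function.Injective σ)
    (h : ∀ i j, i < j → ∃ k < j,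
      (σ j \ σ k).card = 1 ∧ σ i ∩ σ j ⊆ σ k ∧ σ k ⊆ σ i ∪ σ j) :
    StronglyShellable (univ.image σ) := by
  refine ⟨List.ofFn σ, List.nodup_ofFn.2 hσ, by ext; simp [List.mem_ofFn'], fun i j hij => ?_⟩
  obtain ⟨k, hkj, hk⟩ := h ⟨i, by simpa using i.2⟩ ⟨j, by simpa using j.2⟩ hij
  exact ⟨⟨k, by simp⟩, hkj, by simpa [List.get_ofFn] using hk⟩

theorem StronglyShellable.of_rank {α β γ : Type*} [DecidableEq α] [LinearOrder γ]
    (S : Finset β) (f : β → Finset α) (rank : β → γ)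
    (hf : Set.InjOn f S) (hrank : Set.InjOn rank S)
    (h : ∀ x ∈ S, ∀ y ∈ S, rank x < rank y → ∃ z ∈ S, rank z < rank y ∧
      (f y \ f z).card = 1 ∧ f x ∩ f y ⊆ f z ∧ f z ⊆ f x ∪ f y) :
    StronglyShellable (S.image f) := by
  let _ : LinearOrder S :=
    LinearOrder.lift' (rank ∘ (↑)) fun x y hxy => Subtype.ext (hrank x.2 y.2 hxy)
  set e := Fintype.orderIsoFinOfCardEq S rfl
  have himage : univ.image (fun i => f (e i)) = S.image f := by
    ext s
    simp only [mem_image, mem_univ, true_and]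
    exact ⟨fun ⟨i, hi⟩ => ⟨_, (e i).2, hi⟩,
      fun ⟨x, hx, hxs⟩ => ⟨e.symm ⟨x, hx⟩, by simpa using hxs⟩⟩
  rw [← himage]
  refine StronglyShellable.of_fin _ ?_ fun i j hij => ?_
  · exact fun i j hij => e.injective (Subtype.ext (hf (e i).2 (e j).2 hij))
  · obtain ⟨z, hzS, hzj, hz⟩ := h _ (e i).2 _ (e j).2 (e.lt_iff_lt.2 hij)
    refine ⟨e.symm ⟨z, hzS⟩, ?_, by simpa using hz⟩
    rw [← e.lt_iff_lt, e.apply_symm_apply]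
    exact hzj

theorem Finset.card_sdiff_eq_one_of_card_eq_two {α : Type*} [DecidableEq α] {s t : Finset α}
    (hs : s.card = 2) (ht : t.card = 2) (hne : s ≠ t) (hst : ¬Disjoint s t) :
    (t \ s).card = 1 := by
  have hpos : 0 < (t ∩ s).card := by
    rw [inter_comm]
    exact card_pos.2 (not_disjoint_iff_nonempty_inter.1 hst)
  have hle : (t ∩ s).card ≤ 2 := ht ▸ card_le_card inter_subset_left
  have hne2 : (t ∩ s).card ≠ 2 := fun h2 => hne <|
    (eq_of_subset_of_card_le inter_subset_right (by rw [hs, h2])).symm.trans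
      (eq_of_subset_of_card_le inter_subset_left (by rw [ht, h2]))
  have := card_sdiff_add_card_inter t s
  omega

theorem StronglyShellable.of_rank_of_card_eq_two {α β γ : Type*} [DecidableEq α]
    [LinearOrder γ] (S : Finset β) (f : β → Finset α) (rank : β → γ)
    (hf : Set.InjOn f S) (hrank : Set.InjOn rank S) (hcard : ∀ x ∈ S, (f x).card = 2)
    (h : ∀ x ∈ S, ∀ y ∈ S, rank x < rank y → Disjoint (f x) (f y) →
      ∃ z ∈ S, rank z < rank y ∧ (f y \ f z).card = 1 ∧ f z ⊆ f x ∪ f y) :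
    StronglyShellable (S.image f) := by
  refine .of_rank S f rank hf hrank fun x hx y hy hxy => ?_
  by_cases hdisj : Disjoint (f x) (f y)
  · obtain ⟨z, hz, hzy, hcard, hsub⟩ := h x hx y hy hxy hdisj
    exact ⟨z, hz, hzy, hcard, by simp [disjoint_iff_inter_eq_empty.1 hdisj], hsub⟩
  · have hxy' : f x ≠ f y := fun hfxy => hxy.ne (congrArg rank (hf hx hy hfxy))
    exact ⟨x, hx, hxy, card_sdiff_eq_one_of_card_eq_two (hcard x hx) (hcard y hy) hxy' hdisj,
      inter_subset_left, subset_union_left⟩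

theorem mem_edgeSets_iff_s12 {W : Type*} [Fintype W] [DecidableEq W] {G : SimpleGraph W}
    [DecidableRel G.Adj] {e : Finset W} :
    e ∈ edgeSets G ↔ ∃ x y, G.Adj x y ∧ {x, y} = e := by
  simp [edgeSets, Sym2.exists]

theorem exists_injective_key_antitone {V : Type*} [Countable V] (φ : V → ℕ) :
    ∃ key : V → ℕᵒᵈ ×ₗ ℕ, Function.Injective key ∧ ∀ a b, key a < key b → φ b ≤ φ a := by
  obtain ⟨e, he⟩ := exists_injective_nat V
  refine ⟨fun v => toLex (OrderDual.toDual (φ v), e v),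
    fun a b h => he (congrArg (fun x => (ofLex x).2) h), fun a b h => ?_⟩
  rcases Prod.Lex.toLex_lt_toLex.1 h with h | ⟨h, -⟩
  · exact (OrderDual.toDual_lt_toDual.1 h).le
  · exact (OrderDual.toDual_inj.1 h).ge

namespace SimpleGraph.IsTree

variable {V : Type*} {T : SimpleGraph V} (hT : T.IsTree)

noncomputable def uniquePath (u v : V) : T.Walk u v := (hT.existsUnique_path u v).exists.choose

theorem isPath_uniquePath (u v : V) : (hT.uniquePath u v).IsPath :=
  (hT.existsUnique_path u v).exists.choose_spec

theorem eq_uniquePath {u v : V} {p : T.Walk u v} (hp : p.IsPath) : p = hT.uniquePath u v :=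
  (hT.existsUnique_path u v).unique hp (hT.isPath_uniquePath u v)

theorem length_uniquePath (u v : V) : (hT.uniquePath u v).length = T.dist u v := by
  obtain ⟨p, hp, hlen⟩ := hT.connected.exists_path_of_dist u v
  rw [← hT.eq_uniquePath hp, hlen]

theorem reverse_uniquePath (u v : V) : (hT.uniquePath u v).reverse = hT.uniquePath v u :=
  hT.eq_uniquePath (hT.isPath_uniquePath u v).reverse

theorem dist_eq_add_of_mem_support {x y v : V} (h : v ∈ (hT.uniquePath x y).support) :
    T.dist x y = T.dist x v + T.dist v y := by
  have hp := hT.isPath_uniquePath x y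
  have := congrArg Walk.length ((hT.uniquePath x y).take_spec h)
  rwa [Walk.length_append, hT.eq_uniquePath (hp.takeUntil h), hT.eq_uniquePath (hp.dropUntil h),
    length_uniquePath, length_uniquePath, length_uniquePath, eq_comm] at this

noncomputable def firstStep (u v : V) : V := (hT.uniquePath u v).snd

theorem adj_firstStep {u v : V} (h : u ≠ v) : T.Adj u (hT.firstStep u v) :=
  Walk.adj_snd (Walk.not_nil_of_ne h)

theorem mem_support_uniquePath_of_firstStep_ne {v x y : V}
    (h : hT.firstStep v x ≠ hT.firstStep v y) : v ∈ (hT.uniquePath x y).support := by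
  set p := hT.uniquePath v x
  set q := hT.uniquePath v y
  have hshared (z) (hzp : z ∈ p.support) (hzq : z ∈ q.support) : z = v := by
    by_contra hz
    refine h ?_
    rw [firstStep, firstStep, ← Walk.snd_takeUntil hz p hzp, ← Walk.snd_takeUntil hz q hzq,
      hT.eq_uniquePath ((hT.isPath_uniquePath v x).takeUntil hzp),
      hT.eq_uniquePath ((hT.isPath_uniquePath v y).takeUntil hzq)]
  have hpath : (p.reverse.append q).IsPath := by
    rw [Walk.isPath_def, Walk.support_append, Walk.support_reverse, List.nodup_append]
    have hq := (hT.isPath_uniquePath v y).support_nodup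
    refine ⟨List.nodup_reverse.2 (hT.isPath_uniquePath v x).support_nodup,
      hq.sublist (List.tail_sublist _), ?_⟩
    rintro z hzp _ hzq rfl
    obtain rfl := hshared z (List.mem_reverse.1 hzp) (List.mem_of_mem_tail hzq)
    rw [← Walk.cons_tail_support] at hq
    exact (List.nodup_cons.1 hq).1 hzq
  rw [← hT.eq_uniquePath hpath]
  simp

theorem firstStep_eq_firstStep_of_dist_le (r : V) {v x : V} (hx : x ≠ v)
    (h : T.dist r x ≤ T.dist r v) : hT.firstStep v x = hT.firstStep v r := by
  by_contra hne
  have hsplit := hT.dist_eq_add_of_mem_support (hT.mem_support_uniquePath_of_firstStep_ne hne)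
  have hpos := hT.connected.pos_dist_of_ne hx
  rw [dist_comm (u := x) (v := r), dist_comm (u := v)] at hsplit
  omega

theorem firstStep_eq_of_key_lt {K : Type*} [LinearOrder K] {key : V → K} {r : V}
    (hdepth : ∀ a b, key a < key b → T.dist r b ≤ T.dist r a)
    {v x : V} (h : key v < key x) : hT.firstStep v x = hT.firstStep v r :=
  hT.firstStep_eq_firstStep_of_dist_le r (ne_of_apply_ne key h.ne') (hdepth v x h)

theorem firstStep_eq_or_firstStep_eq {a p q : V} (hpq : p ≠ q) :
    hT.firstStep p a = hT.firstStep p q ∨ hT.firstStep q a = hT.firstStep q p := by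
  by_contra! hne
  have hp := hT.dist_eq_add_of_mem_support (hT.mem_support_uniquePath_of_firstStep_ne hne.1)
  have hq := hT.dist_eq_add_of_mem_support (hT.mem_support_uniquePath_of_firstStep_ne hne.2)
  have hpos := hT.connected.pos_dist_of_ne hpq
  rw [dist_comm (u := q) (v := p)] at hq
  omega

theorem exists_isPath_snd_iff {i j k l : V} :
    (∃ w : T.Walk i j, w.IsPath ∧ 0 < w.length ∧
      w.support[1]? = some k ∧ w.support.reverse[1]? = some l) ↔
      i ≠ j ∧ k = hT.firstStep i j ∧ l = hT.firstStep j i := by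
  have hpos {u v : V} : 0 < (hT.uniquePath u v).length ↔ u ≠ v := by
    rw [length_uniquePath]
    exact ⟨fun h huv => by simp [huv] at h, hT.connected.pos_dist_of_ne⟩
  have hsnd {u v : V} (huv : u ≠ v) :
      (hT.uniquePath u v).support[1]? = some (hT.firstStep u v) :=
    ((hT.uniquePath u v).getVert_eq_support_getElem? (hpos.2 huv)).symm
  have hrev (u v : V) : (hT.uniquePath u v).support.reverse = (hT.uniquePath v u).support := by
    rw [← Walk.support_reverse, reverse_uniquePath]
  constructor
  · rintro ⟨w, hw, hlen, hk, hl⟩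
    obtain rfl := hT.eq_uniquePath hw
    have hij := hpos.1 hlen
    rw [hsnd hij, Option.some_inj] at hk
    rw [hrev, hsnd hij.symm, Option.some_inj] at hl
    exact ⟨hij, hk.symm, hl.symm⟩
  · rintro ⟨hij, rfl, rfl⟩
    exact ⟨_, hT.isPath_uniquePath i j, hpos.2 hij, hsnd hij, hrev i j ▸ hsnd hij.symm⟩

theorem genericGraph_adj_iff [DecidableEq V] {x y : GenericVertex T} :
    (genericGraph T).Adj x y ↔
      x.1.1 ≠ y.1.1 ∧ x.1.2 = hT.firstStep x.1.1 y.1.1 ∧ y.1.2 = hT.firstStep y.1.1 x.1.1 := by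
  rw [genericGraph, fromRel_adj, hT.exists_isPath_snd_iff, hT.exists_isPath_snd_iff]
  refine ⟨fun ⟨_, h⟩ => h.elim id fun ⟨hne, hy, hx⟩ => ⟨hne.symm, hx, hy⟩,
    fun h => ⟨fun hxy => h.1 (hxy ▸ rfl), .inl h⟩⟩

section GenericEdge

variable [Fintype V] [DecidableEq V] [DecidableRel T.Adj]

noncomputable def genericVertex {a b : V} (h : a ≠ b) : GenericVertex T :=
  ⟨(a, hT.firstStep a b), hT.adj_firstStep h⟩

noncomputable def genericEdge (a b : V) : Finset (GenericVertex T) :=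
  {x | x.1 = (a, hT.firstStep a b) ∨ x.1 = (b, hT.firstStep b a)}

theorem mem_genericEdge {a b : V} {x : GenericVertex T} :
    x ∈ hT.genericEdge a b ↔ x.1 = (a, hT.firstStep a b) ∨ x.1 = (b, hT.firstStep b a) := by
  simp [genericEdge]

theorem genericEdge_comm (a b : V) : hT.genericEdge a b = hT.genericEdge b a := by
  ext
  simp only [hT.mem_genericEdge, or_comm]

theorem genericEdge_eq_pair {a b : V} (h : a ≠ b) :
    hT.genericEdge a b = {hT.genericVertex h, hT.genericVertex h.symm} := by
  ext
  simp [hT.mem_genericEdge, genericVertex, Subtype.ext_iff]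

theorem card_genericEdge {a b : V} (h : a ≠ b) : (hT.genericEdge a b).card = 2 := by
  rw [hT.genericEdge_eq_pair h, card_pair]
  simp [genericVertex, h]

theorem genericEdge_eq_genericEdge_iff {a b p q : V} (hab : a ≠ b) :
    hT.genericEdge a b = hT.genericEdge p q ↔ a = p ∧ b = q ∨ a = q ∧ b = p := by
  refine ⟨fun h => ?_, ?_⟩
  · have ha : hT.genericVertex hab ∈ hT.genericEdge p q := h ▸ hT.mem_genericEdge.2 (.inl rfl)
    have hb : hT.genericVertex hab.symm ∈ hT.genericEdge p q :=
      h ▸ hT.mem_genericEdge.2 (.inr rfl)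
    simp only [genericVertex, hT.mem_genericEdge, Prod.mk.injEq] at ha hb
    grind
  · rintro (⟨rfl, rfl⟩ | ⟨rfl, rfl⟩)
    · rfl
    · exact hT.genericEdge_comm a b

theorem mem_edgeSets_genericGraph {e : Finset (GenericVertex T)} :
    e ∈ edgeSets (genericGraph T) ↔ ∃ a b, a ≠ b ∧ hT.genericEdge a b = e := by
  rw [mem_edgeSets_iff_s12]
  constructor
  · rintro ⟨x, y, hxy, rfl⟩
    obtain ⟨hne, hx, hy⟩ := hT.genericGraph_adj_iff.1 hxy
    refine ⟨x.1.1, y.1.1, hne, ?_⟩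
    rw [hT.genericEdge_eq_pair hne]
    congr <;> ext <;> simp [genericVertex, hx, hy]
  · rintro ⟨a, b, hab, rfl⟩
    exact ⟨_, _, hT.genericGraph_adj_iff.2 ⟨hab, rfl, rfl⟩, (hT.genericEdge_eq_pair hab).symm⟩

theorem card_sdiff_genericEdge_eq_one_and_subset {a b c d : V} (had : a ≠ d)
    (hcd : c ≠ d) (hb : hT.firstStep a c = hT.firstStep a b)
    (hc : hT.firstStep c a = hT.firstStep c d) :
    (hT.genericEdge c d \ hT.genericEdge a c).card = 1 ∧
      hT.genericEdge a c ⊆ hT.genericEdge a b ∪ hT.genericEdge c d := by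
  refine ⟨card_eq_one.2 ⟨hT.genericVertex hcd.symm, ?_⟩, fun x => ?_⟩
  · ext x
    simp only [mem_sdiff, hT.mem_genericEdge, hb, hc, not_or, genericVertex, mem_singleton,
      Subtype.ext_iff]
    grind
  · simp only [hT.mem_genericEdge, mem_union, hb, hc]
    tauto

end GenericEdge

section DepthOrder

variable [Fintype V] [DecidableEq V] [DecidableRel T.Adj] {K : Type*} [LinearOrder K]
  {key : V → K} {r : V}

theorem exists_earlier_genericEdge (hkey : Function.Injective key)
    (hdepth : ∀ a b, key a < key b → T.dist r b ≤ T.dist r a) {a b p q : V}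
    (hab : key a < key b) (hpq : key p < key q)
    (hlt : toLex (key a, key b) < toLex (key p, key q))
    (hdisj : Disjoint (hT.genericEdge a b) (hT.genericEdge p q)) :
    ∃ z : V × V, key z.1 < key z.2 ∧ toLex (key z.1, key z.2) < toLex (key p, key q) ∧
      (hT.genericEdge p q \ hT.genericEdge z.1 z.2).card = 1 ∧
      hT.genericEdge z.1 z.2 ⊆ hT.genericEdge a b ∪ hT.genericEdge p q := by
  have hparent {x : V} (h : key a < key x) : hT.firstStep a x = hT.firstStep a b :=
    (hT.firstStep_eq_of_key_lt hdepth h).trans (hT.firstStep_eq_of_key_lt hdepth hab).symm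
  have hap : key a < key p := by
    rcases Prod.Lex.toLex_lt_toLex.1 hlt with h | ⟨h, -⟩
    · exact h
    · obtain rfl := hkey h
      refine absurd hdisj
        (not_disjoint_iff.2 ⟨hT.genericVertex (ne_of_apply_ne key hab.ne), ?_, ?_⟩)
      · exact hT.mem_genericEdge.2 (.inl rfl)
      · exact hT.mem_genericEdge.2 (.inl (by simp [genericVertex, hparent hpq]))
  have hlex (c : V) : toLex (key a, key c) < toLex (key p, key q) :=
    Prod.Lex.toLex_lt_toLex.2 (.inl hap)
  have hne {u v : V} (h : key u < key v) : u ≠ v := ne_of_apply_ne key h.ne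
  rcases hT.firstStep_eq_or_firstStep_eq (a := a) (hne hpq) with hp | hq
  · exact ⟨(a, p), hap, hlex p, hT.card_sdiff_genericEdge_eq_one_and_subset
      (hne (hap.trans hpq)) (hne hpq) (hparent hap) hp⟩
  · obtain ⟨hcard, hsub⟩ := hT.card_sdiff_genericEdge_eq_one_and_subset (hne hap)
      (hne hpq).symm (hparent (hap.trans hpq)) hq
    rw [hT.genericEdge_comm q p] at hcard hsub
    exact ⟨(a, q), hap.trans hpq, hlex q, hcard, hsub⟩

theorem edgeSets_genericGraph_eq_image (hkey : Function.Injective key) :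
    edgeSets (genericGraph T) =
      ({p : V × V | key p.1 < key p.2} : Finset (V × V)).image
        fun p => hT.genericEdge p.1 p.2 := by
  ext e
  rw [hT.mem_edgeSets_genericGraph]
  simp only [mem_image, mem_filter, mem_univ, true_and, Prod.exists]
  constructor
  · rintro ⟨a, b, hab, rfl⟩
    rcases lt_or_gt_of_ne (hkey.ne hab) with h | h
    · exact ⟨a, b, h, rfl⟩
    · exact ⟨b, a, h, hT.genericEdge_comm b a⟩
  · rintro ⟨a, b, h, rfl⟩
    exact ⟨a, b, ne_of_apply_ne key h.ne, rfl⟩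

theorem injOn_genericEdge :
    Set.InjOn (fun p : V × V => hT.genericEdge p.1 p.2)
      ↑({p : V × V | key p.1 < key p.2} : Finset (V × V)) := by
  rintro ⟨a, b⟩ hab ⟨p, q⟩ hpq h
  simp only [coe_filter, mem_univ, true_and, Set.mem_ofPred_eq] at hab hpq
  rcases (hT.genericEdge_eq_genericEdge_iff (ne_of_apply_ne key hab.ne)).1 h with
    ⟨rfl, rfl⟩ | ⟨rfl, rfl⟩
  · rfl
  · exact absurd (hab.trans hpq) (lt_irrefl _)

end DepthOrder

end SimpleGraph.IsTree

/-- The generic graph of any tree is edgewise strongly shellable. -/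
theorem stmt12 {V : Type*} [Fintype V] [DecidableEq V] (T : SimpleGraph V) [DecidableRel T.Adj]
    (hT : T.IsTree) :
    StronglyShellable (edgeSets (genericGraph T)) := by
  obtain ⟨r⟩ := hT.connected.nonempty
  obtain ⟨key, hkey, hdepth⟩ := exists_injective_key_antitone (T.dist r)
  rw [hT.edgeSets_genericGraph_eq_image hkey]
  refine .of_rank_of_card_eq_two _ _ (fun p => toLex (key p.1, key p.2)) hT.injOn_genericEdge
    (toLex.injective.comp (hkey.prodMap hkey)).injOn
    (fun p hp => hT.card_genericEdge (ne_of_apply_ne key (mem_filter.1 hp).2.ne)) ?_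
  rintro ⟨a, b⟩ hab ⟨p, q⟩ hpq hlt hdisj
  simp only [mem_filter, mem_univ, true_and] at hab hpq
  obtain ⟨z, hz, hzlt, hcard, hsub⟩ :=
    hT.exists_earlier_genericEdge hkey hdepth hab hpq hlt hdisj
  exact ⟨z, by simpa using hz, hzlt, hcard, hsub⟩
end

section
/- Let T be a tree with n vertices and G_T its generic graph. Then the facets of the independence complex of G_T are exactly the out-tree orientation assignments of T; in particular the independence complex of G_T is pure of dimension n−2 (every maximal independent set of G_T has exactly n−1 vertices). -/
open scoped Classical

/-- The out-tree orientation assignment with root v. -/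
noncomputable def outTreeAssignment {V : Type*} [Fintype V] [DecidableEq V]
    (T : SimpleGraph V) [DecidableRel T.Adj] (v : V) : Finset (GenericVertex T) :=
  Finset.univ.filter fun p => T.dist v p.val.1 < T.dist v p.val.2

/-!
Read `x_{i,k}` as the edge `{i, k}` oriented `i → k`. Two arrows are adjacent in `G_T` exactly when
each points toward the tail of the other. An arrow pointing toward `j` but not toward `v` lies on
the path from `v` to `j`; hence no two arrows of an out-tree point toward each other, and an
out-tree is a maximal independent set because the reverse of any other arrow belongs to it.

Conversely, if `x` conflicts with `a` and its reverse conflicts with `b`, then `a` and `b` conflict.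
So a maximal independent set `s` contains an orientation of every edge, never both, whence
`|s| ≤ n - 1` and some vertex `v` is the head of no arrow of `s`. An arrow of `s` pointing toward
`v` would conflict with the arrow of `s` leaving `v` toward it, so `s` lies in, hence equals, the
out-tree rooted at `v`, which has `n - 1` arrows.
-/

open Finset SimpleGraph Walk

namespace SimpleGraph

variable {V : Type*} {G : SimpleGraph V} {i j k u v w x : V}

lemma Walk.IsPath.append {p : G.Walk u v} {q : G.Walk v w} (hp : p.IsPath) (hq : q.IsPath)
    (h : ∀ x ∈ p.support, x ∈ q.support → x = v) : (p.append q).IsPath := by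
  rw [isPath_def, support_append]
  have hq' := hq.support_nodup
  rw [← q.cons_tail_support, List.nodup_cons] at hq'
  refine hp.support_nodup.append hq'.2 fun x hxp hxq => ?_
  obtain rfl := h x hxp (List.mem_of_mem_tail hxq)
  exact hq'.1 hxq

lemma IsAcyclic.length_eq_dist (hG : G.IsAcyclic) {p : G.Walk u v} (hp : p.IsPath) :
    p.length = G.dist u v := by
  obtain ⟨q, hq, hql⟩ := p.reachable.exists_path_of_dist
  obtain rfl : p = q := congrArg Subtype.val ((hG.subsingleton_path u v).elim ⟨p, hp⟩ ⟨q, hq⟩)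
  exact hql

lemma IsAcyclic.dist_add_dist_of_mem_support (hG : G.IsAcyclic) {p : G.Walk u v} (hp : p.IsPath)
    (hx : x ∈ p.support) : G.dist u x + G.dist x v = G.dist u v := by
  rw [← hG.length_eq_dist (hp.takeUntil hx), ← hG.length_eq_dist (hp.dropUntil hx),
    ← hG.length_eq_dist hp, ← length_append, take_spec]

lemma IsAcyclic.isPath_cons_of_dist_add_one (hG : G.IsAcyclic) (h : G.Adj u v) {q : G.Walk v w}
    (hq : q.IsPath) (hd : G.dist v w + 1 = G.dist u w) : (cons h q).IsPath := by
  refine hq.cons fun hu => ?_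
  have := hG.dist_add_dist_of_mem_support hq hu
  rw [dist_eq_one_iff_adj.mpr h.symm] at this
  omega

lemma IsAcyclic.support_getElem?_one_eq_some_iff (hG : G.IsAcyclic) (hik : G.Adj i k)
    {w : G.Walk i j} (hw : w.IsPath) : w.support[1]? = some k ↔ G.dist k j + 1 = G.dist i j := by
  constructor
  · intro h
    cases w with
    | nil => simp at h
    | cons h' q =>
      obtain rfl : _ = k := by simpa using h
      rw [← hG.length_eq_dist hw, ← hG.length_eq_dist hw.of_cons, length_cons]
  · intro hd
    obtain ⟨r, hr, -⟩ := (hik.symm.reachable.trans w.reachable).exists_path_of_dist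
    have hp := hG.isPath_cons_of_dist_add_one hik hr hd
    obtain rfl : w = cons hik r :=
      congrArg Subtype.val ((hG.subsingleton_path i j).elim ⟨w, hw⟩ ⟨_, hp⟩)
    simp

lemma Reachable.exists_adj_dist_add_one_eq (h : G.Reachable u v) (hne : u ≠ v) :
    ∃ x, G.Adj u x ∧ G.dist x v + 1 = G.dist u v := by
  obtain ⟨p, -, hp⟩ := h.exists_path_of_dist
  cases p with
  | nil => exact absurd rfl hne
  | cons hadj q =>
    refine ⟨_, hadj, le_antisymm ?_ ?_⟩
    · rw [← hp, length_cons]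
      exact Nat.add_le_add_right (dist_le q) 1
    · obtain ⟨r, hr⟩ := q.reachable.exists_walk_length_eq_dist
      rw [← hr, ← length_cons hadj]
      exact dist_le _

lemma exists_adj_of_maximal_isIndepSet {s : Finset V}
    (hs : Maximal (fun t : Finset V ↦ G.IsIndepSet (t : Set V)) s) (hx : x ∉ s) :
    ∃ a ∈ s, G.Adj x a := by
  by_contra! hx'
  refine hx (hs.2 (y := insert x s) ?_ (subset_insert x s) (mem_insert_self x s))
  dsimp only
  rw [coe_insert, IsIndepSet, Set.pairwise_insert]
  exact ⟨hs.1, fun a ha _ => ⟨hx' a ha, fun h => hx' a ha h.symm⟩⟩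

lemma isIndepSet_coe_iff {s : Finset V} :
    G.IsIndepSet (s : Set V) ↔ ∀ a ∈ s, ∀ b ∈ s, ¬ G.Adj a b :=
  ⟨fun hs _ ha _ hb hab => hs ha hb hab.ne hab, fun h a ha b hb _ => h a ha b hb⟩

end SimpleGraph

namespace GenericVertex

variable {V : Type*} {T : SimpleGraph V} {a : GenericVertex T} {j u v : V}

def reverse (a : GenericVertex T) : GenericVertex T := ⟨(a.val.2, a.val.1), a.prop.symm⟩

/-- The arrow `a = x_{i,k}` points toward `j` when `k = b(i, j)`, the first step of the path from
`i` to `j`. -/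
def PointsToward (a : GenericVertex T) (j : V) : Prop :=
  T.dist a.val.2 j + 1 = T.dist a.val.1 j

lemma PointsToward.fst_ne (h : a.PointsToward j) : a.val.1 ≠ j := by
  rintro rfl
  simp [PointsToward] at h

lemma reverse_pointsToward_iff (hT : T.IsTree) : a.reverse.PointsToward j ↔ ¬ a.PointsToward j := by
  have := hT.dist_eq_dist_add_one_of_adj j a.prop
  simp only [PointsToward, reverse, dist_comm (v := j)]
  omega

lemma PointsToward.of_dist_eq_add (hT : T.Connected) (ha : a.PointsToward u)
    (hd : T.dist a.val.1 j = T.dist a.val.1 u + T.dist u j) : a.PointsToward j := by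
  have h₁ : T.dist a.val.2 j ≤ T.dist a.val.2 u + T.dist u j := hT.dist_triangle
  have h₂ : T.dist a.val.1 j ≤ T.dist a.val.1 a.val.2 + T.dist a.val.2 j := hT.dist_triangle
  rw [dist_eq_one_iff_adj.mpr a.prop] at h₂
  unfold PointsToward at *
  omega

/-- `v` and `j` lie on different sides of the edge of `a`, so the path between them runs through
it. -/
lemma PointsToward.dist_eq_add (hT : T.IsTree) (hj : a.PointsToward j) (hv : ¬ a.PointsToward v) :
    T.dist v j = T.dist v a.val.1 + T.dist a.val.1 j := by
  obtain ⟨⟨i, k⟩, hik⟩ := a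
  dsimp only at hik
  have hvk : T.dist v k = T.dist v i + 1 := by
    have := hT.dist_eq_dist_add_one_of_adj v hik
    simp only [PointsToward, dist_comm (v := v)] at hv
    omega
  unfold PointsToward at hj
  dsimp only at hj ⊢
  obtain ⟨p, hp, hpl⟩ := hT.connected.exists_path_of_dist v i
  obtain ⟨r, hr, hrl⟩ := hT.connected.exists_path_of_dist k j
  have hq := hT.isAcyclic.isPath_cons_of_dist_add_one hik hr hj
  have hpq : (p.append (cons hik r)).IsPath := by
    refine hp.append hq fun y hyp hyq => by_contra fun hyi => ?_
    have hyr : y ∈ r.support := by simpa [hyi] using hyq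
    have e₁ := hT.isAcyclic.dist_add_dist_of_mem_support hp hyp
    have e₂ := hT.isAcyclic.dist_add_dist_of_mem_support hr hyr
    have e₃ := hT.isAcyclic.dist_add_dist_of_mem_support hq (List.mem_cons_of_mem _ hyr)
    have e₄ : T.dist v k ≤ T.dist v y + T.dist y k := hT.connected.dist_triangle
    rw [dist_comm (u := y) (v := k)] at e₄
    rw [dist_comm (u := y) (v := i)] at e₁
    omega
  have := hT.isAcyclic.length_eq_dist hpq
  rw [length_append, length_cons, hpl, hrl] at this
  omega

lemma exists_fst_eq_pointsToward (hT : T.Connected) (hne : u ≠ j) :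
    ∃ a : GenericVertex T, a.val.1 = u ∧ a.PointsToward j := by
  obtain ⟨x, hux, hx⟩ := (hT u j).exists_adj_dist_add_one_eq hne
  exact ⟨⟨(u, x), hux⟩, rfl, hx⟩

end GenericVertex

open GenericVertex

section genericGraph

variable {V : Type*} [DecidableEq V] {T : SimpleGraph V} {a b x : GenericVertex T}

lemma genericGraph_adj_iff_s13 (hT : T.IsTree) :
    (genericGraph T).Adj a b ↔
      a.val.1 ≠ b.val.1 ∧ a.PointsToward b.val.1 ∧ b.PointsToward a.val.1 := by
  have hrel : ∀ a b : GenericVertex T, (∃ w : T.Walk a.val.1 b.val.1, w.IsPath ∧ 0 < w.length ∧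
      w.support[1]? = some a.val.2 ∧ w.support.reverse[1]? = some b.val.2) ↔
      a.val.1 ≠ b.val.1 ∧ a.PointsToward b.val.1 ∧ b.PointsToward a.val.1 := by
    intro a b
    constructor
    · rintro ⟨w, hw, hlen, ha, hb⟩
      rw [← support_reverse] at hb
      refine ⟨fun h => ?_, (hT.isAcyclic.support_getElem?_one_eq_some_iff a.prop hw).mp ha,
        (hT.isAcyclic.support_getElem?_one_eq_some_iff b.prop hw.reverse).mp hb⟩
      rw [hT.isAcyclic.length_eq_dist hw, h, dist_self] at hlen
      exact lt_irrefl 0 hlen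
    · rintro ⟨hne, ha, hb⟩
      obtain ⟨w, hw, hwl⟩ := hT.connected.exists_path_of_dist a.val.1 b.val.1
      refine ⟨w, hw, ?_, (hT.isAcyclic.support_getElem?_one_eq_some_iff a.prop hw).mpr ha, ?_⟩
      · rw [hwl]
        exact hT.connected.pos_dist_of_ne hne
      · rw [← support_reverse]
        exact (hT.isAcyclic.support_getElem?_one_eq_some_iff b.prop hw.reverse).mpr hb
  rw [genericGraph, fromRel_adj, hrel, hrel]
  constructor
  · rintro ⟨-, h | ⟨hne, hb, ha⟩⟩
    exacts [h, ⟨hne.symm, ha, hb⟩]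
  · rintro ⟨hne, ha, hb⟩
    exact ⟨fun h => hne (by rw [h]), Or.inl ⟨hne, ha, hb⟩⟩

lemma genericGraph_adj_reverse (a : GenericVertex T) : (genericGraph T).Adj a.reverse a := by
  rw [genericGraph, fromRel_adj]
  refine ⟨fun h => a.prop.ne (congrArg (·.val.2) h), Or.inl ⟨a.prop.symm.toWalk, ?_⟩⟩
  simp [GenericVertex.reverse, a.prop.ne']

lemma pointsToward_of_adj_of_reverse_pointsToward (hT : T.IsTree) (hxa : (genericGraph T).Adj x a)
    {j : V} (hj : x.reverse.PointsToward j) : a.PointsToward j := by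
  rw [genericGraph_adj_iff_s13 hT] at hxa
  obtain ⟨hne, hx, ha⟩ := hxa
  have hd := hj.dist_eq_add hT ((reverse_pointsToward_iff hT).not_left.mpr hx)
  refine ha.of_dist_eq_add hT.connected ?_
  simp only [PointsToward, GenericVertex.reverse] at hx hj hd
  have : T.dist a.val.1 x.val.1 = T.dist x.val.1 a.val.1 := dist_comm
  have : T.dist a.val.1 x.val.2 = T.dist x.val.2 a.val.1 := dist_comm
  omega

lemma genericGraph_adj_of_adj_of_adj_reverse (hT : T.IsTree) (hxa : (genericGraph T).Adj x a)
    (hxb : (genericGraph T).Adj x.reverse b) : (genericGraph T).Adj a b := by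
  have hxa' := (genericGraph_adj_iff_s13 hT).mp hxa
  have hxb' := (genericGraph_adj_iff_s13 hT).mp hxb
  refine (genericGraph_adj_iff_s13 hT).mpr ⟨fun h => ?_,
    pointsToward_of_adj_of_reverse_pointsToward hT hxa hxb'.2.1,
    pointsToward_of_adj_of_reverse_pointsToward hT hxb hxa'.2.1⟩
  exact (reverse_pointsToward_iff hT).mp (h ▸ hxb'.2.1) hxa'.2.1

end genericGraph

section maximal

variable {V : Type*} [DecidableEq V] {T : SimpleGraph V} {s : Finset (GenericVertex T)}

lemma mem_or_reverse_mem_of_maximal (hT : T.IsTree)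
    (hs : Maximal (fun t : Finset (GenericVertex T) ↦ (genericGraph T).IsIndepSet (t : Set _)) s)
    (x : GenericVertex T) : x ∈ s ∨ x.reverse ∈ s := by
  by_contra! h
  obtain ⟨a, ha, hxa⟩ := exists_adj_of_maximal_isIndepSet hs h.1
  obtain ⟨b, hb, hxb⟩ := exists_adj_of_maximal_isIndepSet hs h.2
  exact isIndepSet_coe_iff.mp hs.1 a ha b hb (genericGraph_adj_of_adj_of_adj_reverse hT hxa hxb)

lemma card_le_card_edgeFinset_of_isIndepSet [Fintype T.edgeSet]
    (hs : (genericGraph T).IsIndepSet (s : Set _)) : #s ≤ #T.edgeFinset := by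
  refine card_le_card_of_injOn (fun a ↦ s(a.val.1, a.val.2))
    (fun a _ ↦ mem_edgeFinset.mpr a.prop) fun a ha b hb hab => ?_
  rcases Sym2.eq_iff.mp hab with h | h
  · exact Subtype.ext (Prod.ext h.1 h.2)
  · obtain rfl : b = a.reverse := Subtype.ext (Prod.ext h.2.symm h.1.symm)
    exact absurd (genericGraph_adj_reverse a) (isIndepSet_coe_iff.mp hs _ hb _ ha)

variable [Fintype V]

lemma exists_forall_snd_ne_of_isIndepSet (hT : T.IsTree)
    (hs : (genericGraph T).IsIndepSet (s : Set _)) : ∃ v : V, ∀ a ∈ s, a.val.2 ≠ v := by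
  have hcard : #(s.image fun a ↦ a.val.2) < #(univ : Finset V) := calc
    _ ≤ #s := card_image_le
    _ ≤ #T.edgeFinset := card_le_card_edgeFinset_of_isIndepSet hs
    _ < #(univ : Finset V) := by have := hT.card_edgeFinset; rw [card_univ]; omega
  obtain ⟨v, -, hv⟩ := exists_mem_notMem_of_card_lt_card hcard
  exact ⟨v, fun a ha h => hv (mem_image.mpr ⟨a, ha, h⟩)⟩

variable [DecidableRel T.Adj]

lemma mem_outTreeAssignment_iff (hT : T.IsTree) {a : GenericVertex T} {v : V} :
    a ∈ outTreeAssignment T v ↔ ¬ a.PointsToward v := by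
  have := hT.dist_eq_dist_add_one_of_adj v a.prop
  simp only [outTreeAssignment, mem_filter, mem_univ, true_and, PointsToward, dist_comm (v := v)]
  omega

lemma reverse_mem_outTreeAssignment_iff (hT : T.IsTree) {a : GenericVertex T} {v : V} :
    a.reverse ∈ outTreeAssignment T v ↔ a ∉ outTreeAssignment T v := by
  rw [mem_outTreeAssignment_iff hT, mem_outTreeAssignment_iff hT, reverse_pointsToward_iff hT]

lemma isIndepSet_outTreeAssignment (hT : T.IsTree) (v : V) :
    (genericGraph T).IsIndepSet (outTreeAssignment T v : Set _) := by
  refine isIndepSet_coe_iff.mpr fun a ha b hb hab => ?_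
  rw [mem_outTreeAssignment_iff hT] at ha hb
  obtain ⟨hne, hab, hba⟩ := (genericGraph_adj_iff_s13 hT).mp hab
  have h₁ := hab.dist_eq_add hT ha
  have h₂ := hba.dist_eq_add hT hb
  have : T.dist b.val.1 a.val.1 = T.dist a.val.1 b.val.1 := dist_comm
  exact hne (hT.connected.dist_eq_zero_iff.mp (by omega))

lemma maximal_outTreeAssignment (hT : T.IsTree) (v : V) :
    Maximal (fun t : Finset (GenericVertex T) ↦ (genericGraph T).IsIndepSet (t : Set _))
      (outTreeAssignment T v) := by
  refine ⟨isIndepSet_outTreeAssignment hT v, fun t ht hsub b hb => by_contra fun hbv => ?_⟩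
  have hb' := hsub ((reverse_mem_outTreeAssignment_iff hT).mpr hbv)
  exact isIndepSet_coe_iff.mp ht _ hb' _ hb (genericGraph_adj_reverse b)

lemma exists_eq_outTreeAssignment_of_maximal (hT : T.IsTree)
    (hs : Maximal (fun t : Finset (GenericVertex T) ↦ (genericGraph T).IsIndepSet (t : Set _)) s) :
    ∃ v, s = outTreeAssignment T v := by
  obtain ⟨v, hv⟩ := exists_forall_snd_ne_of_isIndepSet hT hs.1
  refine ⟨v, hs.eq_of_le (isIndepSet_outTreeAssignment hT v) fun c hc =>
    (mem_outTreeAssignment_iff hT).mpr fun hcv => ?_⟩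
  obtain ⟨x, rfl, hx⟩ := exists_fst_eq_pointsToward hT.connected hcv.fst_ne.symm
  rcases mem_or_reverse_mem_of_maximal hT hs x with h | h
  · exact isIndepSet_coe_iff.mp hs.1 x h c hc
      ((genericGraph_adj_iff_s13 hT).mpr ⟨hcv.fst_ne.symm, hx, hcv⟩)
  · exact hv _ h rfl

lemma card_outTreeAssignment (hT : T.IsTree) (v : V) :
    #(outTreeAssignment T v) = Fintype.card V - 1 := by
  have hle := card_le_card_edgeFinset_of_isIndepSet (isIndepSet_outTreeAssignment hT v)
  have hge : #T.edgeFinset ≤ #(outTreeAssignment T v) := by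
    refine card_le_card_of_surjOn (fun a ↦ s(a.val.1, a.val.2)) fun e he => ?_
    induction e using Sym2.ind with | h x y => ?_
    let a : GenericVertex T := ⟨(x, y), mem_edgeFinset.mp he⟩
    by_cases ha : a ∈ outTreeAssignment T v
    · exact ⟨a, ha, rfl⟩
    · exact ⟨a.reverse, (reverse_mem_outTreeAssignment_iff hT).mpr ha, Sym2.eq_swap⟩
  have := hT.card_edgeFinset
  omega

lemma maximal_isIndepSet_iff_exists_eq_outTreeAssignment (hT : T.IsTree) :
    Maximal (fun t : Finset (GenericVertex T) ↦ (genericGraph T).IsIndepSet (t : Set _)) s ↔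
      ∃ v, s = outTreeAssignment T v :=
  ⟨exists_eq_outTreeAssignment_of_maximal hT, fun ⟨v, hv⟩ => hv ▸ maximal_outTreeAssignment hT v⟩

end maximal

/-- The facets of the independence complex of the generic graph of a tree T (i.e. the maximal
independent sets) are exactly the out-tree orientation assignments; in particular every
maximal independent set has exactly n - 1 vertices, where n = |V(T)|. -/
theorem stmt13 {V : Type*} [Fintype V] [DecidableEq V] (T : SimpleGraph V) [DecidableRel T.Adj]
    (hT : T.IsTree) :
    (∀ s : Finset (GenericVertex T),
      ((∀ a ∈ s, ∀ b ∈ s, ¬ (genericGraph T).Adj a b) ∧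
        (∀ t : Finset (GenericVertex T),
          (∀ a ∈ t, ∀ b ∈ t, ¬ (genericGraph T).Adj a b) → s ⊆ t → s = t)) ↔
      (∃ v : V, s = outTreeAssignment T v)) ∧
    (∀ s : Finset (GenericVertex T),
      (∀ a ∈ s, ∀ b ∈ s, ¬ (genericGraph T).Adj a b) →
      (∀ t : Finset (GenericVertex T),
        (∀ a ∈ t, ∀ b ∈ t, ¬ (genericGraph T).Adj a b) → s ⊆ t → s = t) →
      s.card = Fintype.card V - 1) := by
  have hfacet (s : Finset (GenericVertex T)) :
      ((∀ a ∈ s, ∀ b ∈ s, ¬ (genericGraph T).Adj a b) ∧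
        ∀ t : Finset (GenericVertex T),
          (∀ a ∈ t, ∀ b ∈ t, ¬ (genericGraph T).Adj a b) → s ⊆ t → s = t) ↔
      (∃ v : V, s = outTreeAssignment T v) := by
    rw [← maximal_isIndepSet_iff_exists_eq_outTreeAssignment hT, maximal_iff]
    simp only [isIndepSet_coe_iff]
  refine ⟨hfacet, fun s hs hs' => ?_⟩
  obtain ⟨v, rfl⟩ := (hfacet s).mp ⟨hs, hs'⟩
  exact card_outTreeAssignment hT v
end

section
/- Let T be a tree and, for vertices u, v of T, let A_u and A_v be the out-tree orientation assignments with roots u and v respectively. Then |A_u ∖ A_v| = dist_T(u, v). -/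
open scoped Classical

/-!
The darts `x_{a,b}` lying in `A_u` but not in `A_v` are exactly the darts of the path from `u`
to `v`. Along a shortest walk every dart moves away from its start and towards its end. Conversely,
if `a → b` moves away from `u` but not away from `v`, glue shortest walks `a ⇝ u`, `u ⇝ v` and
`v ⇝ b`; since `ab` is a bridge of the tree, this walk uses the edge `ab`, and the distance
conditions rule out every occurrence except the dart `a → b` on the path `u ⇝ v`.
-/

namespace SimpleGraph

variable {V : Type*} {G : SimpleGraph V} {u v a b : V}

namespace Walk

lemma dist_fst_lt_dist_snd_of_mem_darts (p : G.Walk u v) (hp : p.length = G.dist u v)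
    {d : G.Dart} (hd : d ∈ p.darts) : G.dist u d.fst < G.dist u d.snd := by
  obtain ⟨ru, rv, rfl⟩ := (isSubwalk_toWalk_adj_iff_mem_darts p).mpr hd
  have hu : G.dist u d.fst ≤ ru.length := dist_le ru
  have hv : G.dist d.snd v ≤ rv.length := dist_le rv
  have htri : G.dist u v ≤ G.dist u d.snd + G.dist d.snd v :=
    rv.reachable.dist_triangle_right u
  simp only [length_append, Adj.length_toWalk] at hp
  omega

lemma dist_snd_lt_dist_fst_of_mem_darts (p : G.Walk u v) (hp : p.length = G.dist u v)
    {d : G.Dart} (hd : d ∈ p.darts) : G.dist v d.snd < G.dist v d.fst := by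
  simpa using p.reverse.dist_fst_lt_dist_snd_of_mem_darts (by simp [hp, dist_comm])
    (d := d.symm) (mem_darts_reverse.mpr (by simpa using hd))

lemma mem_darts_or_mem_darts_of_mem_edges (p : G.Walk u v) (h : G.Adj a b)
    (he : s(a, b) ∈ p.edges) : ⟨(a, b), h⟩ ∈ p.darts ∨ ⟨(b, a), h.symm⟩ ∈ p.darts := by
  rw [← isSubwalk_toWalk_iff_mem_darts, ← isSubwalk_toWalk_iff_mem_darts]
  exact (isSubwalk_toWalk_iff_mem_edges h).mpr he

end Walk

lemma IsTree.mem_darts_of_dist_lt (hG : G.IsTree) (p : G.Walk u v) (hp : p.length = G.dist u v)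
    (h : G.Adj a b) (hu : G.dist u a < G.dist u b) (hv : G.dist v b ≤ G.dist v a) :
    ⟨(a, b), h⟩ ∈ p.darts := by
  obtain ⟨q₁, hq₁⟩ := hG.connected.exists_walk_length_eq_dist u a
  obtain ⟨q₂, hq₂⟩ := hG.connected.exists_walk_length_eq_dist b v
  have hbridge : s(a, b) ∈ ((q₁.reverse.append p).append q₂.reverse).edges :=
    isBridge_iff_forall_walk_mem_edges.mp (isAcyclic_iff_forall_adj_isBridge.mp hG.isAcyclic h) _
  simp only [Walk.edges_append, Walk.edges_reverse, List.mem_append, List.mem_reverse] at hbridge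
  rcases hbridge with (he | he) | he
  · rcases q₁.mem_darts_or_mem_darts_of_mem_edges h he with hd | hd
    · simpa using q₁.dist_snd_lt_dist_fst_of_mem_darts hq₁ hd
    · exact absurd (q₁.dist_fst_lt_dist_snd_of_mem_darts hq₁ hd) hu.not_gt
  · exact (p.mem_darts_or_mem_darts_of_mem_edges h he).resolve_right fun hd =>
      absurd (p.dist_fst_lt_dist_snd_of_mem_darts hp hd) hu.not_gt
  · rcases q₂.mem_darts_or_mem_darts_of_mem_edges h he with hd | hd
    · simpa using q₂.dist_fst_lt_dist_snd_of_mem_darts hq₂ hd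
    · exact absurd (q₂.dist_snd_lt_dist_fst_of_mem_darts hq₂ hd) hv.not_gt

def Dart.toGenericVertex : G.Dart ↪ GenericVertex G where
  toFun d := ⟨d.toProd, d.adj⟩
  inj' _ _ h := Dart.ext _ _ (congrArg Subtype.val h)

end SimpleGraph

open SimpleGraph

section OutTreeAssignment

variable {V : Type*} [Fintype V] [DecidableEq V] {T : SimpleGraph V} [DecidableRel T.Adj]

lemma mem_outTreeAssignment {v : V} {x : GenericVertex T} :
    x ∈ outTreeAssignment T v ↔ T.dist v x.val.1 < T.dist v x.val.2 := by
  simp [outTreeAssignment]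

lemma outTreeAssignment_sdiff_eq_map_darts (hT : T.IsTree) {u v : V} (p : T.Walk u v)
    (hp : p.length = T.dist u v) :
    outTreeAssignment T u \ outTreeAssignment T v = p.darts.toFinset.map Dart.toGenericVertex := by
  ext x
  simp only [Finset.mem_sdiff, mem_outTreeAssignment, not_lt, Finset.mem_map, List.mem_toFinset]
  constructor
  · rintro ⟨hu, hv⟩
    exact ⟨⟨x.val, x.property⟩, hT.mem_darts_of_dist_lt p hp x.property hu hv, rfl⟩
  · rintro ⟨d, hd, rfl⟩
    exact ⟨p.dist_fst_lt_dist_snd_of_mem_darts hp hd,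
      (p.dist_snd_lt_dist_fst_of_mem_darts hp hd).le⟩

end OutTreeAssignment

theorem stmt14_general {V : Type*} [Fintype V] [DecidableEq V] (T : SimpleGraph V) [DecidableRel T.Adj]
    (hT : T.IsTree) (u v : V) :
    (outTreeAssignment T u \ outTreeAssignment T v).card = T.dist u v := by
  obtain ⟨p, hp⟩ := hT.connected.exists_walk_length_eq_dist u v
  have hdarts : p.darts.Nodup :=
    Walk.darts_nodup_of_support_nodup (p.isPath_of_length_eq_dist hp).support_nodup
  rw [outTreeAssignment_sdiff_eq_map_darts hT p hp, Finset.card_map,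
    List.toFinset_card_of_nodup hdarts, Walk.length_darts, hp]

/-- For distinct out-tree orientation assignments with roots u and v, the distance
|A_u \ A_v| equals the distance between u and v in the tree T. -/
theorem stmt14 {V : Type*} [Fintype V] [DecidableEq V] (T : SimpleGraph V) [DecidableRel T.Adj]
    (hT : T.IsTree) (u v : V) (hne : outTreeAssignment T u ≠ outTreeAssignment T v) :
    (outTreeAssignment T u \ outTreeAssignment T v).card = T.dist u v :=
  stmt14_general T hT u v
end

section
/- Let G be an edgewise strongly shellable bipartite graph, w a vertex of G, and i ∈ {1,2}. Then for any two vertices x, y at distance i from w, the upward neighborhoods satisfy uN_w(x) ⊆ uN_w(y) or uN_w(y) ⊆ uN_w(x), where uN_w(x) = N(x) ∩ D(w, i+1) and D(w,k) is the set of vertices at distance k from w. -/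
/-!
If `z ∈ uN_w(x) \ uN_w(y)` and `z' ∈ uN_w(y) \ uN_w(x)`, then `xz` and `yz'` are disjoint edges.
Bipartiteness forbids edges inside a distance level, so `{x, z, y, z'}` induces `2K₂`. But in an
edgewise strongly shellable graph, shelling the later of two disjoint edges must pass through a
third edge inside their union.
-/

open scoped Classical

theorem StronglyShellable.exists_mem_subset_union {α : Type*} [DecidableEq α]
    {F : Finset (Finset α)} (hF : StronglyShellable F) {e f : Finset α} (he : e ∈ F) (hf : f ∈ F)
    (hef : Disjoint e f) (he1 : 1 < e.card) (hf1 : 1 < f.card) :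
    ∃ g ∈ F, g ⊆ e ∪ f ∧ g ≠ e ∧ g ≠ f := by
  obtain ⟨l, -, rfl, hshell⟩ := hF
  obtain ⟨a, rfl⟩ := List.mem_iff_get.1 (List.mem_toFinset.1 he)
  obtain ⟨b, rfl⟩ := List.mem_iff_get.1 (List.mem_toFinset.1 hf)
  clear he hf
  wlog hab : (a : ℕ) < b generalizing a b
  · have hba : (b : ℕ) < a := by
      refine lt_of_le_of_ne (not_lt.1 hab) fun h => ?_
      rw [Fin.ext h, disjoint_self, Finset.bot_eq_empty] at hef
      rw [hef, Finset.card_empty] at he1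
      omega
    obtain ⟨g, hg, hsub, hgb, hga⟩ := this b hf1 a he1 hef.symm hba
    exact ⟨g, hg, Finset.union_comm (l.get a) _ ▸ hsub, hga, hgb⟩
  obtain ⟨k, -, hcard, -, hsub⟩ := hshell a b hab
  refine ⟨l.get k, List.mem_toFinset.2 (l.get_mem k), hsub, fun h => ?_, fun h => ?_⟩
  · rw [h, Finset.sdiff_eq_self_of_disjoint hef.symm] at hcard
    omega
  · rw [h, Finset.sdiff_self, Finset.card_empty] at hcard
    omega

theorem mem_edgeSets {V : Type*} [Fintype V] [DecidableEq V] {G : SimpleGraph V}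
    [DecidableRel G.Adj] {s : Finset V} : s ∈ edgeSets G ↔ ∃ u v, G.Adj u v ∧ s = {u, v} := by
  simp only [edgeSets, Finset.mem_image, SimpleGraph.mem_edgeFinset]
  constructor
  · rintro ⟨e, he, rfl⟩
    induction e using Sym2.ind with
    | _ u v => exact ⟨u, v, he, rfl⟩
  · rintro ⟨u, v, h, rfl⟩
    exact ⟨s(u, v), h, rfl⟩

theorem adj_cross_of_stronglyShellable_edgeSets {V : Type*} [Fintype V] [DecidableEq V]
    {G : SimpleGraph V} [DecidableRel G.Adj] (hG : StronglyShellable (edgeSets G))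
    {x z y z' : V} (hxz : G.Adj x z) (hyz' : G.Adj y z')
    (hxy : x ≠ y) (hxz' : x ≠ z') (hzy : z ≠ y) (hzz' : z ≠ z') :
    G.Adj x y ∨ G.Adj x z' ∨ G.Adj z y ∨ G.Adj z z' := by
  have hdisj : Disjoint ({x, z} : Finset V) {y, z'} := by
    simp [hxy.symm, hzy.symm, hxz'.symm, hzz'.symm]
  obtain ⟨g, hg, hsub, hgxz, hgyz'⟩ := hG.exists_mem_subset_union
    (mem_edgeSets.2 ⟨x, z, hxz, rfl⟩) (mem_edgeSets.2 ⟨y, z', hyz', rfl⟩) hdisj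
    (by rw [Finset.card_pair hxz.ne]; omega) (by rw [Finset.card_pair hyz'.ne]; omega)
  obtain ⟨p, q, hpq, rfl⟩ := mem_edgeSets.1 hg
  have hp := hsub (Finset.mem_insert_self p {q})
  have hq := hsub (Finset.mem_insert_of_mem (Finset.mem_singleton_self q))
  simp only [Finset.mem_union, Finset.mem_insert, Finset.mem_singleton, or_assoc] at hp hq
  rcases hp with rfl | rfl | rfl | rfl <;> rcases hq with rfl | rfl | rfl | rfl <;>
    simp_all [Finset.pair_comm, SimpleGraph.adj_comm]

/-- Closing the two shortest walks from `w` with the edge `uv` would give an odd closed walk. -/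
theorem SimpleGraph.Colorable.dist_ne_of_adj {V : Type*} {G : SimpleGraph V}
    (hG : G.Colorable 2) {w u v : V} (hu : G.Reachable w u) (huv : G.Adj u v) :
    G.dist w u ≠ G.dist w v := by
  intro heq
  obtain ⟨p, hp⟩ := hu.exists_walk_length_eq_dist
  obtain ⟨q, hq⟩ := (hu.trans huv.reachable).exists_walk_length_eq_dist
  have := two_colorable_iff_forall_loop_even.1 hG w (p.append (.cons huv q.reverse))
  simp [hp, hq, heq, ← Nat.not_odd_iff_even] at this

theorem stmt16_general {V : Type*} [Fintype V] [DecidableEq V] (G : SimpleGraph V)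
    [DecidableRel G.Adj] (hESS : StronglyShellable (edgeSets G)) (hbip : G.Colorable 2)
    (w : V) (i : ℕ) (x y : V)
    (hx : G.dist w x = i) (hy : G.dist w y = i) :
    {z : V | G.Adj x z ∧ G.dist w z = i + 1} ⊆ {z : V | G.Adj y z ∧ G.dist w z = i + 1} ∨
    {z : V | G.Adj y z ∧ G.dist w z = i + 1} ⊆ {z : V | G.Adj x z ∧ G.dist w z = i + 1} := by
  rw [or_iff_not_imp_left, Set.not_subset]
  rintro ⟨z, ⟨hxz, hz⟩, hyz⟩ z' ⟨hyz', hz'⟩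
  by_contra hxz'
  have hwz : G.Reachable w z := .of_dist_ne_zero (by omega)
  have hwx : G.Reachable w x := hwz.trans hxz.symm.reachable
  have hxy : x ≠ y := by
    rintro rfl
    exact hyz ⟨hxz, hz⟩
  rcases adj_cross_of_stronglyShellable_edgeSets hESS hxz hyz' hxy (by rintro rfl; omega)
    (by rintro rfl; omega) (by rintro rfl; exact hxz' ⟨hxz, hz⟩) with h | h | h | h
  · exact hbip.dist_ne_of_adj hwx h (hx.trans hy.symm)
  · exact hxz' ⟨h, hz'⟩
  · exact hyz ⟨h.symm, hz⟩
  · exact hbip.dist_ne_of_adj hwz h (hz.trans hz'.symm)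

/-- In an ESS bipartite graph, for any vertex w, i ∈ {1,2}, and vertices x, y at distance i
from w, the upward neighborhoods uN_w(x) = N(x) ∩ D(w,i+1) are comparable by inclusion. -/
theorem stmt16 {V : Type*} [Fintype V] [DecidableEq V] (G : SimpleGraph V)
    [DecidableRel G.Adj] (hESS : StronglyShellable (edgeSets G)) (hbip : G.Colorable 2)
    (w : V) (i : ℕ) (hi : i = 1 ∨ i = 2) (x y : V)
    (hx : G.dist w x = i) (hy : G.dist w y = i) :
    {z : V | G.Adj x z ∧ G.dist w z = i + 1} ⊆ {z : V | G.Adj y z ∧ G.dist w z = i + 1} ∨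
    {z : V | G.Adj y z ∧ G.dist w z = i + 1} ⊆ {z : V | G.Adj x z ∧ G.dist w z = i + 1} :=
  stmt16_general G hESS hbip w i x y hx hy
end
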